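/- arXiv:2311.15021 — 3 statements merged into one kernel-verified Lean document; each statement's English description precedes it below -/
import Mathlib

section
/- Let H be a locally compact Hausdorff groupoid with open source map and let X be a free and proper right H-space with open anchor map σ : X → H⁰. Then the quotient G = (X ×_σ,σ X^op)/H of the fibred product by the diagonal H-action, with source and range s[x,y^op] = [y,y^op], r[x,y^op] = [x,x^op], and multiplication [x,y^op]·[y,z^op] = [x,z^op], is a locally compact Hausdorff groupoid with open source map, acting freely and properly on the left of X via [x,y^op]·y = x, and X is a (G,H)-groupoid equivalence. -/
/-- A topological groupoid: a topological space `G` with source and range maps (valued in the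
units, viewed inside `G`), a partially defined multiplication, and inversion, all continuous. -/
structure TopGroupoid (G : Type*) [TopologicalSpace G] : Type _ where
  src : G → G
  rng : G → G
  mul : (g h : G) → src g = rng h → G
  inv : G → G
  rng_src : ∀ g, rng (src g) = src g
  src_src : ∀ g, src (src g) = src g
  src_rng : ∀ g, src (rng g) = rng g
  rng_rng : ∀ g, rng (rng g) = rng g
  src_mul : ∀ g h hgh, src (mul g h hgh) = src h
  rng_mul : ∀ g h hgh, rng (mul g h hgh) = rng g
  mul_assoc : ∀ g h k (hgh : src g = rng h) (hhk : src h = rng k)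
    (h₁ : src (mul g h hgh) = rng k) (h₂ : src g = rng (mul h k hhk)),
    mul (mul g h hgh) k h₁ = mul g (mul h k hhk) h₂
  src_inv : ∀ g, src (inv g) = rng g
  rng_inv : ∀ g, rng (inv g) = src g
  mul_inv : ∀ g (h : src g = rng (inv g)), mul g (inv g) h = rng g
  inv_mul : ∀ g (h : src (inv g) = rng g), mul (inv g) g h = src g
  mul_src : ∀ g (h : src g = rng (src g)), mul g (src g) h = g
  rng_mul' : ∀ g (h : src (rng g) = rng g), mul (rng g) g h = g
  continuous_src : Continuous src
  continuous_rng : Continuous rng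
  continuous_inv : Continuous inv
  continuous_mul : Continuous (fun p : {p : G × G // src p.1 = rng p.2} =>
    mul p.1.1 p.1.2 p.2)

namespace TopGroupoid

variable {G : Type*} [TopologicalSpace G] (𝒢 : TopGroupoid G)

/-- The unit space of the groupoid, viewed as a subset of `G`. -/
def units : Set G := Set.range 𝒢.rng

/-- The source map is open (onto the unit space, with its subspace topology). -/
def OpenSource : Prop :=
  ∀ U : Set G, IsOpen U → ∃ V : Set G, IsOpen V ∧ 𝒢.src '' U = V ∩ 𝒢.units

end TopGroupoid

/-- A continuous right action of a topological groupoid `H` on a topological space `X`,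
along an anchor map `σ : X → H` (valued in the units of `H`). -/
structure RightGroupoidAction {H : Type*} [TopologicalSpace H] (𝒢 : TopGroupoid H)
    (X : Type*) [TopologicalSpace X] : Type _ where
  anchor : X → H
  anchor_unit : ∀ x, 𝒢.rng (anchor x) = anchor x
  continuous_anchor : Continuous anchor
  act : (x : X) → (h : H) → anchor x = 𝒢.rng h → X
  anchor_act : ∀ x h hc, anchor (act x h hc) = 𝒢.src h
  act_unit : ∀ x (hc : anchor x = 𝒢.rng (anchor x)), act x (anchor x) hc = x
  act_mul : ∀ x h h' (hc : anchor x = 𝒢.rng h) (hc' : anchor (act x h hc) = 𝒢.rng h')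
    (hhh : 𝒢.src h = 𝒢.rng h') (hc'' : anchor x = 𝒢.rng (𝒢.mul h h' hhh)),
    act (act x h hc) h' hc' = act x (𝒢.mul h h' hhh) hc''
  continuous_act : Continuous (fun p : {p : X × H // anchor p.1 = 𝒢.rng p.2} =>
    act p.1.1 p.1.2 p.2)

namespace RightGroupoidAction

variable {H : Type*} [TopologicalSpace H] {𝒢 : TopGroupoid H}
  {X : Type*} [TopologicalSpace X] (ρ : RightGroupoidAction 𝒢 X)

/-- The action is free: only units act trivially. -/
def IsFree : Prop := ∀ x h hc, ρ.act x h hc = x → h = ρ.anchor x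

/-- The action is proper: `(x, h) ↦ (x, x·h)` is a proper map. -/
def IsProper : Prop :=
  IsProperMap (fun p : {p : X × H // ρ.anchor p.1 = 𝒢.rng p.2} =>
    ((p.1.1, ρ.act p.1.1 p.1.2 p.2) : X × X))

/-- The anchor map is open onto the unit space. -/
def OpenAnchor : Prop :=
  ∀ U : Set X, IsOpen U → ∃ V : Set H, IsOpen V ∧ ρ.anchor '' U = V ∩ 𝒢.units

/-- The anchor map is surjective onto the unit space. -/
def SurjAnchor : Prop := ∀ u ∈ 𝒢.units, ∃ x, ρ.anchor x = u

/-- `X` is a principal (free and proper) right `H`-space. -/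
def IsPrincipal : Prop := ρ.IsFree ∧ ρ.IsProper

/-- Two points of the fibred product `X ×_{σ,σ} X` are equivalent when they differ by the
diagonal action of `H`. -/
def diagRel (p q : {p : X × X // ρ.anchor p.1 = ρ.anchor p.2}) : Prop :=
  ∃ (h : H) (hc₁ : ρ.anchor p.1.1 = 𝒢.rng h) (hc₂ : ρ.anchor p.1.2 = 𝒢.rng h),
    q.1.1 = ρ.act p.1.1 h hc₁ ∧ q.1.2 = ρ.act p.1.2 h hc₂

end RightGroupoidAction

/-- A continuous left action of a topological groupoid. -/
structure LeftGroupoidAction {G : Type*} [TopologicalSpace G] (𝒢 : TopGroupoid G)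
    (X : Type*) [TopologicalSpace X] : Type _ where
  anchor : X → G
  anchor_unit : ∀ x, 𝒢.rng (anchor x) = anchor x
  continuous_anchor : Continuous anchor
  act : (g : G) → (x : X) → 𝒢.src g = anchor x → X
  anchor_act : ∀ g x hc, anchor (act g x hc) = 𝒢.rng g
  act_unit : ∀ x (hc : 𝒢.src (anchor x) = anchor x), act (anchor x) x hc = x
  act_mul : ∀ g g' x (hc : 𝒢.src g' = anchor x) (hc' : 𝒢.src g = anchor (act g' x hc))
    (hgg : 𝒢.src g = 𝒢.rng g') (hc'' : 𝒢.src (𝒢.mul g g' hgg) = anchor x),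
    act g (act g' x hc) hc' = act (𝒢.mul g g' hgg) x hc''
  continuous_act : Continuous (fun p : {p : G × X // 𝒢.src p.1 = anchor p.2} =>
    act p.1.1 p.1.2 p.2)

namespace LeftGroupoidAction

variable {G : Type*} [TopologicalSpace G] {𝒢 : TopGroupoid G}
  {X : Type*} [TopologicalSpace X] (lam : LeftGroupoidAction 𝒢 X)

def IsFree : Prop := ∀ g x hc, lam.act g x hc = x → g = lam.anchor x

def IsProper : Prop :=
  IsProperMap (fun p : {p : G × X // 𝒢.src p.1 = lam.anchor p.2} =>
    ((lam.act p.1.1 p.1.2 p.2, p.1.2) : X × X))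

def OpenAnchor : Prop :=
  ∀ U : Set X, IsOpen U → ∃ V : Set G, IsOpen V ∧ lam.anchor '' U = V ∩ 𝒢.units

def SurjAnchor : Prop := ∀ u ∈ 𝒢.units, ∃ x, lam.anchor x = u

def IsPrincipal : Prop := lam.IsFree ∧ lam.IsProper

end LeftGroupoidAction

/-- A `(G, H)`-groupoid equivalence: commuting principal left `G`- and right `H`-actions on
`X` whose anchor maps are open surjections onto the unit spaces and identify `X/H` with `G⁰`
and `G\X` with `H⁰` (encoded: the fibres of each anchor map are exactly the orbits of the
other action). -/
structure GroupoidEquivalence {G H : Type*} [TopologicalSpace G] [TopologicalSpace H]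
    (𝒢 : TopGroupoid G) (ℋ : TopGroupoid H) (X : Type*) [TopologicalSpace X] : Type _ where
  lact : LeftGroupoidAction 𝒢 X
  ract : RightGroupoidAction ℋ X
  commute : ∀ g x h (hcl : 𝒢.src g = lact.anchor x) (hcr : ract.anchor x = ℋ.rng h)
    (hcr' : ract.anchor (lact.act g x hcl) = ℋ.rng h)
    (hcl' : 𝒢.src g = lact.anchor (ract.act x h hcr)),
    ract.act (lact.act g x hcl) h hcr' = lact.act g (ract.act x h hcr) hcl'
  lact_principal : lact.IsPrincipal
  ract_principal : ract.IsPrincipal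
  lact_openAnchor : lact.OpenAnchor
  ract_openAnchor : ract.OpenAnchor
  lact_surjAnchor : lact.SurjAnchor
  ract_surjAnchor : ract.SurjAnchor
  /-- the right anchor `σ` is invariant under the left action and its fibres are the
  `G`-orbits -/
  ract_anchor_lact : ∀ g x hc, ract.anchor (lact.act g x hc) = ract.anchor x
  ract_anchor_eq_iff : ∀ x y, ract.anchor x = ract.anchor y ↔
    ∃ g hc, lact.act g y hc = x
  /-- the left anchor `ρ` is invariant under the right action and its fibres are the
  `H`-orbits -/
  lact_anchor_ract : ∀ x h hc, lact.anchor (ract.act x h hc) = lact.anchor x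
  lact_anchor_eq_iff : ∀ x y, lact.anchor x = lact.anchor y ↔
    ∃ h hc, ract.act y h hc = x

/-!
Everything is computed on representatives in the fibred product `X ×_σ X`. Freeness makes the
translation `τ(b, y)`, the element of `H` carrying `b` to `y`, unique, so that
`[a, b]·x = a·τ(b, x)` and `[a, b]·[y, z] = [a·τ(b, y), z]` are well defined, and
`[x, y]·[y, z] = [x, z]`. Properness makes `(x, h) ↦ (x, x·h)` a closed embedding, so `τ` is
continuous on the closed orbit relation; this gives continuity of the operations, and shows that
the orbit relation of the diagonal action, the locus `τ(x, x') = τ(y, y')`, is closed. Openness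
of the source map of `H` makes the quotient map `X ×_σ X → G` open, whence `G` is Hausdorff and
locally compact, and openness of `σ` passes to the source map of `G`.
-/
open Topology Set

section OpenOnto

variable {A B C : Type*} [TopologicalSpace A] [TopologicalSpace B] [TopologicalSpace C]

def IsOpenOnto (f : A → C) (S : Set C) : Prop :=
  ∀ U : Set A, IsOpen U → ∃ V : Set C, IsOpen V ∧ f '' U = V ∩ S

theorem IsOpenOnto.isOpenMap_pullback_snd {f : A → C} {g : B → C} {S : Set C}
    (hf : IsOpenOnto f S) (hg : Continuous g) (hgS : ∀ b, g b ∈ S) :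
    IsOpenMap (fun p : {p : A × B // f p.1 = g p.2} => p.1.2) := by
  intro U hU
  obtain ⟨O, hO, rfl⟩ := isOpen_induced_iff.mp hU
  rw [isOpen_iff_forall_mem_open]
  rintro _ ⟨p, hp, rfl⟩
  obtain ⟨P, Q, hP, hQ, hpP, hpQ, hPQ⟩ := isOpen_prod_iff.mp hO _ _ hp
  obtain ⟨V, hV, hfV⟩ := hf P hP
  have hpV : g p.1.2 ∈ V ∩ S := hfV ▸ ⟨p.1.1, hpP, p.2⟩
  refine ⟨Q ∩ g ⁻¹' V, ?_, hQ.inter (hV.preimage hg), hpQ, hpV.1⟩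
  rintro b ⟨hbQ, hbV⟩
  obtain ⟨a, haP, hab⟩ : g b ∈ f '' P := hfV ▸ ⟨hbV, hgS b⟩
  exact ⟨⟨(a, b), hab⟩, hPQ ⟨haP, hbQ⟩, rfl⟩

end OpenOnto

namespace TopGroupoid

variable {G : Type*} [TopologicalSpace G] (𝒢 : TopGroupoid G)

open scoped Classical in
/-- Multiplication extended by `g` off the composable pairs, so that rewriting never meets a
dependent compatibility proof. -/
noncomputable def tmul (g h : G) : G :=
  if hc : 𝒢.src g = 𝒢.rng h then 𝒢.mul g h hc else g

variable {𝒢} {g h k : G}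

theorem tmul_of (hc : 𝒢.src g = 𝒢.rng h) : 𝒢.tmul g h = 𝒢.mul g h hc := dif_pos hc

theorem rng_tmul (hc : 𝒢.src g = 𝒢.rng h) : 𝒢.rng (𝒢.tmul g h) = 𝒢.rng g := by
  rw [tmul_of hc, 𝒢.rng_mul]

theorem tmul_assoc (hgh : 𝒢.src g = 𝒢.rng h) (hhk : 𝒢.src h = 𝒢.rng k) :
    𝒢.tmul (𝒢.tmul g h) k = 𝒢.tmul g (𝒢.tmul h k) := by
  have h₁ : 𝒢.src (𝒢.mul g h hgh) = 𝒢.rng k := (𝒢.src_mul g h hgh).trans hhk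
  have h₂ : 𝒢.src g = 𝒢.rng (𝒢.mul h k hhk) := hgh.trans (𝒢.rng_mul h k hhk).symm
  rw [tmul_of hgh, tmul_of hhk, tmul_of h₁, tmul_of h₂, 𝒢.mul_assoc]

theorem tmul_inv (g : G) : 𝒢.tmul g (𝒢.inv g) = 𝒢.rng g := by
  rw [tmul_of (𝒢.rng_inv g).symm, 𝒢.mul_inv]

theorem inv_tmul (g : G) : 𝒢.tmul (𝒢.inv g) g = 𝒢.src g := by
  rw [tmul_of (𝒢.src_inv g), 𝒢.inv_mul]

theorem tmul_src_self (g : G) : 𝒢.tmul g (𝒢.src g) = g := by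
  rw [tmul_of (𝒢.rng_src g).symm, 𝒢.mul_src]

theorem rng_self_tmul (g : G) : 𝒢.tmul (𝒢.rng g) g = g := by
  rw [tmul_of (𝒢.src_rng g), 𝒢.rng_mul']

theorem inv_inv (g : G) : 𝒢.inv (𝒢.inv g) = g := by
  have hsrc : 𝒢.src (𝒢.inv (𝒢.inv g)) = 𝒢.src g := (𝒢.src_inv _).trans (𝒢.rng_inv g)
  calc 𝒢.inv (𝒢.inv g) = 𝒢.tmul (𝒢.inv (𝒢.inv g)) (𝒢.tmul (𝒢.inv g) g) := by
        rw [inv_tmul, ← hsrc, tmul_src_self]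
    _ = 𝒢.tmul (𝒢.tmul (𝒢.inv (𝒢.inv g)) (𝒢.inv g)) g :=
        (tmul_assoc (𝒢.src_inv _) (𝒢.src_inv g)).symm
    _ = g := by rw [inv_tmul, 𝒢.src_inv, rng_self_tmul]

theorem isOpenMap_inv : IsOpenMap 𝒢.inv :=
  (Homeomorph.mk ⟨𝒢.inv, 𝒢.inv, inv_inv, inv_inv⟩
    𝒢.continuous_inv 𝒢.continuous_inv).isOpenMap

theorem OpenSource.isOpenOnto_rng (hsrc : 𝒢.OpenSource) : IsOpenOnto 𝒢.rng 𝒢.units := by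
  intro U hU
  obtain ⟨V, hV, hUV⟩ := hsrc (𝒢.inv '' U) (isOpenMap_inv U hU)
  refine ⟨V, hV, ?_⟩
  rw [← hUV, image_image]
  simp only [𝒢.src_inv]

end TopGroupoid

namespace RightGroupoidAction

variable {H X : Type*} [TopologicalSpace H] [TopologicalSpace X] {𝒢 : TopGroupoid H}

section TotalAction

variable (ra : RightGroupoidAction 𝒢 X)

open scoped Classical in
/-- The action extended by `x` off the composable pairs. -/
noncomputable def tact (x : X) (h : H) : X :=
  if hc : ra.anchor x = 𝒢.rng h then ra.act x h hc else x

variable {ra} {x y : X} {h k : H}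

theorem tact_of (hc : ra.anchor x = 𝒢.rng h) : ra.tact x h = ra.act x h hc := dif_pos hc

theorem anchor_tact (hc : ra.anchor x = 𝒢.rng h) : ra.anchor (ra.tact x h) = 𝒢.src h := by
  rw [tact_of hc, ra.anchor_act]

theorem anchor_mem_units (x : X) : ra.anchor x ∈ 𝒢.units := ⟨ra.anchor x, ra.anchor_unit x⟩

theorem tact_tact (hc : ra.anchor x = 𝒢.rng h) (hhk : 𝒢.src h = 𝒢.rng k) :
    ra.tact (ra.tact x h) k = ra.tact x (𝒢.tmul h k) := by
  have hc' : ra.anchor (ra.act x h hc) = 𝒢.rng k := (ra.anchor_act x h hc).trans hhk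
  have hc'' : ra.anchor x = 𝒢.rng (𝒢.mul h k hhk) := hc.trans (𝒢.rng_mul h k hhk).symm
  rw [tact_of hc, tact_of hc', TopGroupoid.tmul_of hhk, tact_of hc'', ra.act_mul]

theorem tact_anchor (x : X) : ra.tact x (ra.anchor x) = x := by
  rw [tact_of (ra.anchor_unit x).symm, ra.act_unit]

theorem tact_tact_inv (hc : ra.anchor x = 𝒢.rng h) : ra.tact (ra.tact x h) (𝒢.inv h) = x := by
  rw [tact_tact hc (𝒢.rng_inv h).symm, TopGroupoid.tmul_inv, ← hc, tact_anchor]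

theorem tact_tact_inv_tmul (hc : ra.anchor x = 𝒢.rng h) (hk : 𝒢.rng h = 𝒢.rng k) :
    ra.tact (ra.tact x h) (𝒢.tmul (𝒢.inv h) k) = ra.tact x k := by
  have hik : 𝒢.src (𝒢.inv h) = 𝒢.rng k := (𝒢.src_inv h).trans hk
  rw [tact_tact hc (by rw [TopGroupoid.rng_tmul hik, 𝒢.rng_inv]),
    ← TopGroupoid.tmul_assoc (𝒢.rng_inv h).symm hik, TopGroupoid.tmul_inv, hk,
    TopGroupoid.rng_self_tmul]

theorem continuous_tact {α : Type*} [TopologicalSpace α] {a : α → X} {b : α → H}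
    (ha : Continuous a) (hb : Continuous b) (hab : ∀ s, ra.anchor (a s) = 𝒢.rng (b s)) :
    Continuous fun s => ra.tact (a s) (b s) := by
  simp only [tact_of (hab _)]
  exact ra.continuous_act.comp ((ha.prodMk hb).subtype_mk hab)

theorem IsFree.tact_injective (hfree : ra.IsFree) (hc : ra.anchor x = 𝒢.rng h)
    (hc' : ra.anchor x = 𝒢.rng k) (he : ra.tact x h = ra.tact x k) : h = k := by
  have hsrc : 𝒢.src h = 𝒢.src k := by rw [← anchor_tact hc, ← anchor_tact hc', he]
  have hhk : 𝒢.src h = 𝒢.rng (𝒢.inv k) := hsrc.trans (𝒢.rng_inv k).symm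
  have hcM : ra.anchor x = 𝒢.rng (𝒢.tmul h (𝒢.inv k)) := by rw [TopGroupoid.rng_tmul hhk, hc]
  have hunit : 𝒢.tmul h (𝒢.inv k) = ra.anchor x := by
    refine hfree x _ hcM ?_
    rw [← tact_of hcM, ← tact_tact hc hhk, he, tact_tact_inv hc']
  calc h = 𝒢.tmul h (𝒢.tmul (𝒢.inv k) k) := by rw [TopGroupoid.inv_tmul, ← hsrc,
          TopGroupoid.tmul_src_self]
    _ = 𝒢.tmul (𝒢.tmul h (𝒢.inv k)) k := (TopGroupoid.tmul_assoc hhk (𝒢.src_inv k)).symm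
    _ = k := by rw [hunit, hc', TopGroupoid.rng_self_tmul]

end TotalAction

section Translation

variable (ra : RightGroupoidAction 𝒢 X)

def SameOrbit (x y : X) : Prop := ∃ h, ra.anchor x = 𝒢.rng h ∧ ra.tact x h = y

open scoped Classical in
/-- The translation `τ(x, y)`, the element of `H` carrying `x` to `y`; it is junk (the unit at
`x`) when `y` is not in the orbit of `x`. -/
noncomputable def translation (x y : X) : H :=
  if ho : ra.SameOrbit x y then ho.choose else ra.anchor x

variable {ra} {x y z : X} {h : H}

theorem SameOrbit.anchor_eq_rng_translation (ho : ra.SameOrbit x y) :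
    ra.anchor x = 𝒢.rng (ra.translation x y) := by
  rw [translation, dif_pos ho]; exact ho.choose_spec.1

theorem SameOrbit.tact_translation (ho : ra.SameOrbit x y) :
    ra.tact x (ra.translation x y) = y := by
  rw [translation, dif_pos ho]; exact ho.choose_spec.2

theorem SameOrbit.anchor_tact_translation (ho : ra.SameOrbit y z)
    (hxy : ra.anchor x = ra.anchor y) :
    ra.anchor (ra.tact x (ra.translation y z)) = ra.anchor z := by
  have hz := anchor_tact ho.anchor_eq_rng_translation
  rw [ho.tact_translation] at hz
  rw [anchor_tact (hxy.trans ho.anchor_eq_rng_translation), hz]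

theorem IsFree.translation_tact (hfree : ra.IsFree) (hc : ra.anchor x = 𝒢.rng h) :
    ra.translation x (ra.tact x h) = h :=
  have ho : ra.SameOrbit x (ra.tact x h) := ⟨h, hc, rfl⟩
  hfree.tact_injective ho.anchor_eq_rng_translation hc ho.tact_translation

/-- `a · τ(b, y)` is invariant under the diagonal action on `(a, b)`: by uniqueness,
`τ(b·h, y) = h⁻¹ τ(b, y)`. -/
theorem IsFree.tact_translation_tact (hfree : ra.IsFree) {a b : X}
    (hab : ra.anchor a = ra.anchor b) (ho : ra.SameOrbit b y) (hc : ra.anchor a = 𝒢.rng h) :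
    ra.tact (ra.tact a h) (ra.translation (ra.tact b h) y) = ra.tact a (ra.translation b y) := by
  have hcb : ra.anchor b = 𝒢.rng h := hab ▸ hc
  have hrng : 𝒢.rng h = 𝒢.rng (ra.translation b y) := hcb.symm.trans ho.anchor_eq_rng_translation
  have hτ : ra.translation (ra.tact b h) y = 𝒢.tmul (𝒢.inv h) (ra.translation b y) := by
    have hsrc : 𝒢.src (𝒢.inv h) = 𝒢.rng (ra.translation b y) := (𝒢.src_inv h).trans hrng
    conv_lhs => rw [← ho.tact_translation, ← tact_tact_inv_tmul hcb hrng]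
    refine hfree.translation_tact ?_
    rw [anchor_tact hcb, TopGroupoid.rng_tmul hsrc, 𝒢.rng_inv]
  rw [hτ, tact_tact_inv_tmul hc hrng]

theorem IsProper.isClosed_setOf_sameOrbit (hproper : ra.IsProper) :
    IsClosed {r : X × X | ra.SameOrbit r.1 r.2} := by
  convert hproper.isClosedMap.isClosed_range using 1
  ext ⟨x, y⟩
  constructor
  · rintro ⟨h, hc, he⟩
    exact ⟨⟨(x, h), hc⟩, Prod.ext rfl ((tact_of hc).symm.trans he)⟩
  · rintro ⟨⟨⟨x', h⟩, hc⟩, he⟩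
    simp only [Prod.mk.injEq] at he
    obtain ⟨rfl, rfl⟩ := he
    exact ⟨h, hc, tact_of hc⟩

/-- For a principal action, `(x, h) ↦ (x, x·h)` is a closed embedding, and `τ` is the second
coordinate of its inverse on the orbit relation. -/
theorem IsPrincipal.continuousOn_translation (hprin : ra.IsPrincipal) :
    ContinuousOn (fun r : X × X => ra.translation r.1 r.2) {r | ra.SameOrbit r.1 r.2} := by
  obtain ⟨hfree, hproper⟩ := hprin
  have hinj : Function.Injective fun p : {p : X × H // ra.anchor p.1 = 𝒢.rng p.2} =>
      ((p.1.1, ra.act p.1.1 p.1.2 p.2) : X × X) := by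
    rintro ⟨⟨x, h⟩, hc⟩ ⟨⟨x', h'⟩, hc'⟩ he
    simp only [Prod.mk.injEq] at he
    obtain ⟨rfl, he⟩ := he
    rw [← tact_of hc, ← tact_of hc'] at he
    cases hfree.tact_injective hc hc' he
    rfl
  have hemb := IsClosedEmbedding.of_continuous_injective_isClosedMap hproper.continuous hinj
    hproper.isClosedMap
  rw [continuousOn_iff_continuous_domRestrict]
  have hlift : Continuous fun r : {r : X × X | ra.SameOrbit r.1 r.2} =>
      (⟨(r.1.1, ra.translation r.1.1 r.1.2), r.2.anchor_eq_rng_translation⟩ :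
        {p : X × H // ra.anchor p.1 = 𝒢.rng p.2}) := by
    rw [hemb.isInducing.continuous_iff]
    convert continuous_subtype_val using 1
    ext r : 1
    exact Prod.ext rfl ((tact_of _).symm.trans r.2.tact_translation)
  exact continuous_snd.comp (continuous_subtype_val.comp hlift)

end Translation

section FibreProduct

variable (ra : RightGroupoidAction 𝒢 X)

abbrev FibProd : Type _ := {p : X × X // ra.anchor p.1 = ra.anchor p.2}

noncomputable def diagAct (p : ra.FibProd) (h : H) : ra.FibProd :=
  ⟨(ra.tact p.1.1 h, ra.tact p.1.2 h), by
    by_cases hc : ra.anchor p.1.1 = 𝒢.rng h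
    · rw [anchor_tact hc, anchor_tact (p.2 ▸ hc)]
    · rw [tact, tact, dif_neg hc, dif_neg (p.2 ▸ hc)]
      exact p.2⟩

variable {ra} {p q : ra.FibProd} {h k : H}

theorem diagAct_anchor (p : ra.FibProd) : ra.diagAct p (ra.anchor p.1.1) = p :=
  Subtype.ext (Prod.ext (tact_anchor _) (p.2 ▸ tact_anchor _))

theorem diagAct_diagAct (hc : ra.anchor p.1.1 = 𝒢.rng h) (hhk : 𝒢.src h = 𝒢.rng k) :
    ra.diagAct (ra.diagAct p h) k = ra.diagAct p (𝒢.tmul h k) :=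
  Subtype.ext (Prod.ext (tact_tact hc hhk) (tact_tact (p.2 ▸ hc) hhk))

theorem diagAct_diagAct_inv (hc : ra.anchor p.1.1 = 𝒢.rng h) :
    ra.diagAct (ra.diagAct p h) (𝒢.inv h) = p :=
  Subtype.ext (Prod.ext (tact_tact_inv hc) (tact_tact_inv (p.2 ▸ hc)))

theorem diagRel_iff : ra.diagRel p q ↔ ∃ h, ra.anchor p.1.1 = 𝒢.rng h ∧ ra.diagAct p h = q := by
  constructor
  · rintro ⟨h, hc₁, hc₂, he₁, he₂⟩
    exact ⟨h, hc₁,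
      Subtype.ext (Prod.ext ((tact_of hc₁).trans he₁.symm) ((tact_of hc₂).trans he₂.symm))⟩
  · rintro ⟨h, hc, rfl⟩
    exact ⟨h, hc, p.2 ▸ hc, tact_of hc, tact_of _⟩

variable (ra) in
theorem diagRel_equivalence : Equivalence ra.diagRel where
  refl p := diagRel_iff.mpr ⟨_, (ra.anchor_unit _).symm, diagAct_anchor p⟩
  symm {p q} hpq := by
    obtain ⟨h, hc, rfl⟩ := diagRel_iff.mp hpq
    exact diagRel_iff.mpr ⟨𝒢.inv h, (anchor_tact hc).trans (𝒢.rng_inv h).symm,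
      diagAct_diagAct_inv hc⟩
  trans {p q r} hpq hqr := by
    obtain ⟨h, hc, rfl⟩ := diagRel_iff.mp hpq
    obtain ⟨k, hk, rfl⟩ := diagRel_iff.mp hqr
    have hhk : 𝒢.src h = 𝒢.rng k := (anchor_tact hc).symm.trans hk
    exact diagRel_iff.mpr ⟨𝒢.tmul h k, hc.trans (TopGroupoid.rng_tmul hhk).symm,
      (diagAct_diagAct hc hhk).symm⟩

theorem mk_eq_mk_iff : Quot.mk ra.diagRel p = Quot.mk _ q ↔ ra.diagRel p q :=
  ⟨fun h => (diagRel_equivalence ra).eqvGen_iff.mp (Quot.eqvGen_exact h), Quot.sound⟩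

theorem mk_diagAct (hc : ra.anchor p.1.1 = 𝒢.rng h) :
    Quot.mk ra.diagRel (ra.diagAct p h) = Quot.mk _ p :=
  (Quot.sound (diagRel_iff.mpr ⟨h, hc, rfl⟩)).symm

theorem IsFree.mk_eq_mk_iff_translation (hfree : ra.IsFree) :
    Quot.mk ra.diagRel p = Quot.mk _ q ↔ ra.SameOrbit p.1.1 q.1.1 ∧ ra.SameOrbit p.1.2 q.1.2 ∧
      ra.translation p.1.1 q.1.1 = ra.translation p.1.2 q.1.2 := by
  rw [mk_eq_mk_iff, diagRel_iff]
  constructor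
  · rintro ⟨h, hc, rfl⟩
    exact ⟨⟨h, hc, rfl⟩, ⟨h, p.2 ▸ hc, rfl⟩,
      (hfree.translation_tact hc).trans (hfree.translation_tact (p.2 ▸ hc)).symm⟩
  · rintro ⟨ho₁, ho₂, hτ⟩
    refine ⟨_, ho₁.anchor_eq_rng_translation, Subtype.ext (Prod.ext ho₁.tact_translation ?_)⟩
    exact (congrArg (ra.tact p.1.2) hτ).trans ho₂.tact_translation

theorem isOpenMap_mk (hsrc : 𝒢.OpenSource) : IsOpenMap (Quot.mk ra.diagRel) := by
  intro U hU
  let act : {q : H × ra.FibProd // 𝒢.rng q.1 = ra.anchor q.2.1.1} → ra.FibProd :=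
    fun q => ra.diagAct q.1.2 q.1.1
  have hact : Continuous act := by
    have hp : Continuous fun q : {q : H × ra.FibProd // 𝒢.rng q.1 = ra.anchor q.2.1.1} =>
      q.1.2.1 := continuous_subtype_val.comp continuous_subtype_val.snd
    have hh : Continuous fun q : {q : H × ra.FibProd // 𝒢.rng q.1 = ra.anchor q.2.1.1} =>
      q.1.1 := continuous_subtype_val.fst
    exact ((continuous_tact hp.fst hh fun q => q.2.symm).prodMk
      (continuous_tact hp.snd hh fun q => q.1.2.2.symm.trans q.2.symm)).subtype_mk _
  have hsat : Quot.mk ra.diagRel ⁻¹' (Quot.mk ra.diagRel '' U) =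
      (fun q : {q : H × ra.FibProd // 𝒢.rng q.1 = ra.anchor q.2.1.1} => q.1.2) ''
        (act ⁻¹' U) := by
    ext p
    constructor
    · rintro ⟨q, hq, hqp⟩
      obtain ⟨h, hc, rfl⟩ := diagRel_iff.mp (mk_eq_mk_iff.mp hqp.symm)
      exact ⟨⟨(h, p), hc.symm⟩, hq, rfl⟩
    · rintro ⟨⟨⟨h, p⟩, hc⟩, hq, rfl⟩
      exact ⟨_, hq, mk_diagAct hc.symm⟩
  rw [isOpen_coinduced, hsat]
  exact hsrc.isOpenOnto_rng.isOpenMap_pullback_snd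
    (ra.continuous_anchor.comp (continuous_subtype_val.fst))
    (fun p => anchor_mem_units _) _ (hU.preimage hact)

theorem isOpenQuotientMap_mk (hsrc : 𝒢.OpenSource) :
    IsOpenQuotientMap (Quot.mk ra.diagRel) :=
  ⟨Quot.mk_surjective, continuous_quot_mk, isOpenMap_mk hsrc⟩

variable (ra) in
theorem isClosed_fibProd [T2Space H] : IsClosed {p : X × X | ra.anchor p.1 = ra.anchor p.2} :=
  isClosed_eq (ra.continuous_anchor.comp continuous_fst) (ra.continuous_anchor.comp continuous_snd)

theorem locallyCompactSpace_quot [T2Space H] [LocallyCompactSpace X]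
    (hsrc : 𝒢.OpenSource) : LocallyCompactSpace (Quot ra.diagRel) :=
  haveI : LocallyCompactSpace ra.FibProd := (isClosed_fibProd ra).locallyCompactSpace
  (isOpenQuotientMap_mk hsrc).locallyCompactSpace

/-- The orbit relation of the diagonal action is closed: it is cut out of the closed set of pairs
of orbit-related coordinates by the equation `τ(x, x') = τ(y, y')` between continuous functions
to the Hausdorff space `H`. -/
theorem IsPrincipal.t2Space_quot [T2Space H] (hprin : ra.IsPrincipal) (hsrc : 𝒢.OpenSource) :
    T2Space (Quot ra.diagRel) := by
  rw [t2Space_iff_of_isOpenQuotientMap (isOpenQuotientMap_mk hsrc)]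
  have hO := hprin.2.isClosed_setOf_sameOrbit
  let c₁ : ra.FibProd × ra.FibProd → X × X := fun q => (q.1.1.1, q.2.1.1)
  let c₂ : ra.FibProd × ra.FibProd → X × X := fun q => (q.1.1.2, q.2.1.2)
  have hc₁ : Continuous c₁ := by fun_prop
  have hc₂ : Continuous c₂ := by fun_prop
  let s := c₁ ⁻¹' {r | ra.SameOrbit r.1 r.2} ∩ c₂ ⁻¹' {r | ra.SameOrbit r.1 r.2}
  have hτ : ContinuousOn (fun q => (ra.translation (c₁ q).1 (c₁ q).2,
      ra.translation (c₂ q).1 (c₂ q).2)) s :=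
    (hprin.continuousOn_translation.comp hc₁.continuousOn fun _ hq => hq.1).prodMk
      (hprin.continuousOn_translation.comp hc₂.continuousOn fun _ hq => hq.2)
  convert hτ.preimage_isClosed_of_isClosed ((hO.preimage hc₁).inter (hO.preimage hc₂))
    isClosed_diagonal using 1
  ext q
  exact (hprin.1.mk_eq_mk_iff_translation).trans and_assoc.symm

end FibreProduct

section Operations

variable (ra : RightGroupoidAction 𝒢 X)

def diagMk (x : X) : Quot ra.diagRel := Quot.mk _ ⟨(x, x), rfl⟩

variable {ra} {p : ra.FibProd} {a x y z : X} {h : H}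

theorem continuous_diagMk : Continuous ra.diagMk :=
  continuous_quot_mk.comp ((continuous_id.prodMk continuous_id).subtype_mk _)

theorem diagMk_tact (hc : ra.anchor x = 𝒢.rng h) : ra.diagMk (ra.tact x h) = ra.diagMk x :=
  mk_diagAct (p := ⟨(x, x), rfl⟩) hc

theorem diagMk_eq_diagMk_iff : ra.diagMk x = ra.diagMk y ↔ ra.SameOrbit x y := by
  rw [diagMk, diagMk, mk_eq_mk_iff, diagRel_iff]
  constructor
  · rintro ⟨h, hc, he⟩
    exact ⟨h, hc, congrArg (fun p : ra.FibProd => p.1.1) he⟩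
  · rintro ⟨h, hc, rfl⟩
    exact ⟨h, hc, rfl⟩

theorem eq_of_mk_eq_diagMk (he : Quot.mk ra.diagRel p = ra.diagMk z) : p.1.1 = p.1.2 := by
  obtain ⟨h, -, rfl⟩ := diagRel_iff.mp (mk_eq_mk_iff.mp he.symm)
  rfl

variable (ra)

def imprSrc : Quot ra.diagRel → Quot ra.diagRel :=
  Quot.lift (fun p => ra.diagMk p.1.2) fun p _ hpq => by
    obtain ⟨h, hc, rfl⟩ := diagRel_iff.mp hpq
    exact (diagMk_tact (p.2 ▸ hc)).symm

def imprRng : Quot ra.diagRel → Quot ra.diagRel :=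
  Quot.lift (fun p => ra.diagMk p.1.1) fun _ _ hpq => by
    obtain ⟨h, hc, rfl⟩ := diagRel_iff.mp hpq
    exact (diagMk_tact hc).symm

def imprInv : Quot ra.diagRel → Quot ra.diagRel :=
  Quot.lift (fun p => Quot.mk _ ⟨(p.1.2, p.1.1), p.2.symm⟩) fun p _ hpq => by
    obtain ⟨h, hc, rfl⟩ := diagRel_iff.mp hpq
    exact (mk_diagAct (p := ⟨(p.1.2, p.1.1), p.2.symm⟩) (p.2 ▸ hc)).symm

/-- The left action `[a, b]·x = a·τ(b, x)`, computed on the representative chosen by `out`. -/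
noncomputable def lact (c : Quot ra.diagRel) (x : X) : X :=
  ra.tact c.out.1.1 (ra.translation c.out.1.2 x)

open scoped Classical in
/-- The product `c·[y, z] = [c·y, z]`, and `c` when the pair is not composable. -/
noncomputable def imprMul (c d : Quot ra.diagRel) : Quot ra.diagRel :=
  if hd : ra.anchor (ra.lact c d.out.1.1) = ra.anchor d.out.1.2 then
    Quot.mk _ ⟨(ra.lact c d.out.1.1, d.out.1.2), hd⟩
  else c

variable {ra}

theorem exists_eq_mk_of_imprSrc_eq {c : Quot ra.diagRel} (hc : ra.imprSrc c = ra.diagMk x) :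
    ∃ (a : X) (ha : ra.anchor a = ra.anchor x), c = Quot.mk _ ⟨(a, x), ha⟩ := by
  induction c using Quot.ind with | mk p => ?_
  obtain ⟨h, hh, rfl⟩ := diagMk_eq_diagMk_iff.mp hc
  exact ⟨_, (ra.diagAct p h).2, (mk_diagAct (p.2.trans hh)).symm⟩

theorem exists_eq_mk_mk_of_imprSrc_eq_imprRng {c d : Quot ra.diagRel}
    (hcd : ra.imprSrc c = ra.imprRng d) :
    ∃ (x y z : X) (hxy : ra.anchor x = ra.anchor y) (hyz : ra.anchor y = ra.anchor z),
      c = Quot.mk _ ⟨(x, y), hxy⟩ ∧ d = Quot.mk _ ⟨(y, z), hyz⟩ := by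
  induction d using Quot.ind with | mk q => ?_
  obtain ⟨x, hxy, rfl⟩ := exists_eq_mk_of_imprSrc_eq hcd
  exact ⟨x, q.1.1, q.1.2, hxy, q.2, rfl, rfl⟩

theorem IsFree.lact_mk (hfree : ra.IsFree) (ho : ra.SameOrbit p.1.2 x) :
    ra.lact (Quot.mk _ p) x = ra.tact p.1.1 (ra.translation p.1.2 x) := by
  obtain ⟨h, hc, hout⟩ :=
    diagRel_iff.mp (mk_eq_mk_iff.mp (Quot.out_eq (Quot.mk ra.diagRel p)).symm)
  rw [lact, ← hout]
  exact hfree.tact_translation_tact p.2 ho hc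

theorem IsFree.lact_mk_tact (hfree : ra.IsFree) (ha : ra.anchor a = ra.anchor x)
    (hc : ra.anchor x = 𝒢.rng h) :
    ra.lact (Quot.mk _ ⟨(a, x), ha⟩) (ra.tact x h) = ra.tact a h := by
  rw [hfree.lact_mk ⟨h, hc, rfl⟩]
  exact congrArg _ (hfree.translation_tact hc)

theorem IsFree.lact_mk_self (hfree : ra.IsFree) (ha : ra.anchor a = ra.anchor x) :
    ra.lact (Quot.mk _ ⟨(a, x), ha⟩) x = a := by
  have := hfree.lact_mk_tact ha (ra.anchor_unit x).symm
  rwa [tact_anchor, ← ha, tact_anchor] at this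

theorem IsFree.anchor_lact (hfree : ra.IsFree) {c : Quot ra.diagRel}
    (hc : ra.imprSrc c = ra.diagMk x) : ra.anchor (ra.lact c x) = ra.anchor x := by
  obtain ⟨a, ha, rfl⟩ := exists_eq_mk_of_imprSrc_eq hc
  rwa [hfree.lact_mk_self]

theorem IsFree.imprMul_mk_mk (hfree : ra.IsFree) (hxy : ra.anchor x = ra.anchor y)
    (hyz : ra.anchor y = ra.anchor z) :
    ra.imprMul (Quot.mk _ ⟨(x, y), hxy⟩) (Quot.mk _ ⟨(y, z), hyz⟩) =
      Quot.mk _ ⟨(x, z), hxy.trans hyz⟩ := by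
  obtain ⟨h, hc, hout⟩ :=
    diagRel_iff.mp (mk_eq_mk_iff.mp (Quot.out_eq (Quot.mk ra.diagRel ⟨(y, z), hyz⟩)).symm)
  have hl : ra.lact (Quot.mk _ ⟨(x, y), hxy⟩) (ra.tact y h) = ra.tact x h :=
    hfree.lact_mk_tact hxy hc
  rw [imprMul, ← hout, dif_pos (hl ▸ (ra.diagAct ⟨(x, z), hxy.trans hyz⟩ h).2)]
  refine Eq.trans ?_ (mk_diagAct (hxy.trans hc))
  exact congrArg _ (Subtype.ext (Prod.ext hl rfl))

theorem IsFree.imprMul_mk_mk_of_sameOrbit (hfree : ra.IsFree) {q : ra.FibProd}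
    (ho : ra.SameOrbit p.1.2 q.1.1) :
    ra.imprMul (Quot.mk _ p) (Quot.mk _ q) =
      Quot.mk _ ⟨(ra.tact p.1.1 (ra.translation p.1.2 q.1.1), q.1.2),
        (ho.anchor_tact_translation p.2).trans q.2⟩ := by
  have hp : Quot.mk ra.diagRel p = Quot.mk _ ⟨(ra.tact p.1.1 (ra.translation p.1.2 q.1.1), q.1.1),
      ho.anchor_tact_translation p.2⟩ :=
    (mk_diagAct (p.2.trans ho.anchor_eq_rng_translation)).symm.trans
      (congrArg _ (Subtype.ext (Prod.ext rfl ho.tact_translation)))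
  rw [hp]
  exact hfree.imprMul_mk_mk _ q.2

end Operations

section Imprimitivity

variable {ra : RightGroupoidAction 𝒢 X}

theorem IsPrincipal.continuous_tact_translation (hprin : ra.IsPrincipal) {α : Type*}
    [TopologicalSpace α] {a b c : α → X} (ha : Continuous a) (hb : Continuous b)
    (hc : Continuous c) (hab : ∀ s, ra.anchor (a s) = ra.anchor (b s))
    (ho : ∀ s, ra.SameOrbit (b s) (c s)) :
    Continuous fun s => ra.tact (a s) (ra.translation (b s) (c s)) :=
  continuous_tact ha (hprin.continuousOn_translation.comp_continuous (hb.prodMk hc) ho)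
    fun s => (hab s).trans (ho s).anchor_eq_rng_translation

theorem IsPrincipal.continuous_imprMul (hprin : ra.IsPrincipal) (hsrc : 𝒢.OpenSource) :
    Continuous fun d : {d : Quot ra.diagRel × Quot ra.diagRel // ra.imprSrc d.1 = ra.imprRng d.2} =>
      ra.imprMul d.1.1 d.1.2 := by
  let S := {d : Quot ra.diagRel × Quot ra.diagRel | ra.imprSrc d.1 = ra.imprRng d.2}
  have hq := (((isOpenQuotientMap_mk hsrc).prodMap (isOpenQuotientMap_mk hsrc)).restrictPreimage
    S).isQuotientMap
  change Continuous fun d : S => ra.imprMul d.1.1 d.1.2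
  rw [hq.continuous_iff]
  have ho (t : Prod.map (Quot.mk ra.diagRel) (Quot.mk ra.diagRel) ⁻¹' S) :
      ra.SameOrbit t.1.1.1.2 t.1.2.1.1 := diagMk_eq_diagMk_iff.mp t.2
  refine Continuous.congr ?_ fun t => (hprin.1.imprMul_mk_mk_of_sameOrbit (ho t)).symm
  have hp : Continuous fun t : Prod.map (Quot.mk ra.diagRel) (Quot.mk ra.diagRel) ⁻¹' S =>
    t.1.1.1 := continuous_subtype_val.comp continuous_subtype_val.fst
  have hq : Continuous fun t : Prod.map (Quot.mk ra.diagRel) (Quot.mk ra.diagRel) ⁻¹' S =>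
    t.1.2.1 := continuous_subtype_val.comp continuous_subtype_val.snd
  exact continuous_quot_mk.comp (((hprin.continuous_tact_translation hp.fst hp.snd hq.fst
    (fun t => t.1.1.2) ho).prodMk hq.snd).subtype_mk _)

theorem IsPrincipal.continuous_lact (hprin : ra.IsPrincipal) (hsrc : 𝒢.OpenSource) :
    Continuous fun t : {t : Quot ra.diagRel × X // ra.imprSrc t.1 = ra.diagMk t.2} =>
      ra.lact t.1.1 t.1.2 := by
  let S := {t : Quot ra.diagRel × X | ra.imprSrc t.1 = ra.diagMk t.2}
  have hq := (((isOpenQuotientMap_mk hsrc).prodMap IsOpenQuotientMap.id).restrictPreimage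
    S).isQuotientMap
  change Continuous fun t : S => ra.lact t.1.1 t.1.2
  rw [hq.continuous_iff]
  have ho (t : Prod.map (Quot.mk ra.diagRel) id ⁻¹' S) : ra.SameOrbit t.1.1.1.2 t.1.2 :=
    diagMk_eq_diagMk_iff.mp t.2
  refine Continuous.congr ?_ fun t => (hprin.1.lact_mk (ho t)).symm
  have hp : Continuous fun t : Prod.map (Quot.mk ra.diagRel) id ⁻¹' S => t.1.1.1 :=
    continuous_subtype_val.comp continuous_subtype_val.fst
  exact hprin.continuous_tact_translation hp.fst hp.snd
    continuous_subtype_val.snd (fun t => t.1.1.2) ho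

variable (ra)

noncomputable def imprGroupoid (hprin : ra.IsPrincipal) (hsrc : 𝒢.OpenSource) :
    TopGroupoid (Quot ra.diagRel) where
  src := ra.imprSrc
  rng := ra.imprRng
  mul c d _ := ra.imprMul c d
  inv := ra.imprInv
  rng_src := Quot.ind fun _ => rfl
  src_src := Quot.ind fun _ => rfl
  src_rng := Quot.ind fun _ => rfl
  rng_rng := Quot.ind fun _ => rfl
  src_mul c d hcd := by
    obtain ⟨x, y, z, hxy, hyz, rfl, rfl⟩ := exists_eq_mk_mk_of_imprSrc_eq_imprRng hcd
    rw [hprin.1.imprMul_mk_mk]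
    rfl
  rng_mul c d hcd := by
    obtain ⟨x, y, z, hxy, hyz, rfl, rfl⟩ := exists_eq_mk_mk_of_imprSrc_eq_imprRng hcd
    rw [hprin.1.imprMul_mk_mk]
    rfl
  mul_assoc c d e hcd hde _ _ := by
    obtain ⟨y, z, w, hyz, hzw, rfl, rfl⟩ := exists_eq_mk_mk_of_imprSrc_eq_imprRng hde
    obtain ⟨x, hxy, rfl⟩ := exists_eq_mk_of_imprSrc_eq hcd
    simp only [hprin.1.imprMul_mk_mk]
  src_inv := Quot.ind fun _ => rfl
  rng_inv := Quot.ind fun _ => rfl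
  mul_inv := Quot.ind fun p _ => hprin.1.imprMul_mk_mk p.2 p.2.symm
  inv_mul := Quot.ind fun p _ => hprin.1.imprMul_mk_mk p.2.symm p.2
  mul_src := Quot.ind fun p _ => hprin.1.imprMul_mk_mk p.2 rfl
  rng_mul' := Quot.ind fun p _ => hprin.1.imprMul_mk_mk rfl p.2
  continuous_src := continuous_quot_lift _ (continuous_diagMk.comp continuous_subtype_val.snd)
  continuous_rng := continuous_quot_lift _ (continuous_diagMk.comp continuous_subtype_val.fst)
  continuous_inv := continuous_quot_lift _ (continuous_quot_mk.comp
    ((continuous_subtype_val.snd.prodMk continuous_subtype_val.fst).subtype_mk _))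
  continuous_mul := hprin.continuous_imprMul hsrc

noncomputable def imprLeftAction (hprin : ra.IsPrincipal) (hsrc : 𝒢.OpenSource) :
    LeftGroupoidAction (ra.imprGroupoid hprin hsrc) X where
  anchor := ra.diagMk
  anchor_unit _ := rfl
  continuous_anchor := continuous_diagMk
  act c x _ := ra.lact c x
  anchor_act c x hc := by
    obtain ⟨a, ha, rfl⟩ := exists_eq_mk_of_imprSrc_eq hc
    rw [hprin.1.lact_mk_self]
    rfl
  act_unit x _ := hprin.1.lact_mk_self rfl
  act_mul c d x hd hc _ _ := by
    obtain ⟨a, ha, rfl⟩ := exists_eq_mk_of_imprSrc_eq hd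
    change ra.imprSrc c = ra.diagMk (ra.lact _ x) at hc
    rw [hprin.1.lact_mk_self] at hc
    obtain ⟨b, hb, rfl⟩ := exists_eq_mk_of_imprSrc_eq hc
    change ra.lact _ (ra.lact _ x) = ra.lact (ra.imprMul _ _) x
    rw [hprin.1.imprMul_mk_mk, hprin.1.lact_mk_self, hprin.1.lact_mk_self, hprin.1.lact_mk_self]
  continuous_act := hprin.continuous_lact hsrc

/-- `(c, x) ↦ (c·x, x)` identifies the composable pairs with the fibred product `X ×_σ X`, which
is closed in `X × X`; this is why the left action is proper. -/
noncomputable def composableHomeomorph (hprin : ra.IsPrincipal) (hsrc : 𝒢.OpenSource) :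
    {t : Quot ra.diagRel × X // ra.imprSrc t.1 = ra.diagMk t.2} ≃ₜ ra.FibProd where
  toFun t := ⟨(ra.lact t.1.1 t.1.2, t.1.2), hprin.1.anchor_lact t.2⟩
  invFun p := ⟨(Quot.mk _ p, p.1.2), rfl⟩
  left_inv := by
    rintro ⟨⟨c, x⟩, hc⟩
    dsimp only at hc
    obtain ⟨a, ha, rfl⟩ := exists_eq_mk_of_imprSrc_eq hc
    refine Subtype.ext (Prod.ext ?_ rfl)
    exact congrArg (Quot.mk ra.diagRel) (Subtype.ext (Prod.ext (hprin.1.lact_mk_self ha) rfl))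
  right_inv p := Subtype.ext (Prod.ext (hprin.1.lact_mk_self p.2) rfl)
  continuous_toFun := ((hprin.continuous_lact hsrc).prodMk
    continuous_subtype_val.snd).subtype_mk _
  continuous_invFun := (continuous_quot_mk.prodMk continuous_subtype_val.snd).subtype_mk _

theorem isPrincipal_imprLeftAction [T2Space H] (hprin : ra.IsPrincipal) (hsrc : 𝒢.OpenSource) :
    (ra.imprLeftAction hprin hsrc).IsPrincipal := by
  refine ⟨fun c x hc he => ?_, ?_⟩
  · obtain ⟨a, ha, rfl⟩ := exists_eq_mk_of_imprSrc_eq hc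
    change ra.lact _ x = x at he
    rw [hprin.1.lact_mk_self] at he
    subst he
    rfl
  · show IsProperMap (Subtype.val ∘ ra.composableHomeomorph hprin hsrc)
    exact ((isClosed_fibProd ra).isClosedEmbedding_subtypeVal.comp
      (ra.composableHomeomorph hprin hsrc).isClosedEmbedding).isProperMap

theorem isOpenOnto_diagMk (hsrc : 𝒢.OpenSource) : IsOpenOnto ra.diagMk (range ra.imprRng) := by
  intro U hU
  refine ⟨Quot.mk _ '' {p : ra.FibProd | p.1.1 ∈ U ∧ p.1.2 ∈ U}, isOpenMap_mk hsrc _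
    ((hU.preimage continuous_subtype_val.fst).inter (hU.preimage continuous_subtype_val.snd)), ?_⟩
  ext c
  constructor
  · rintro ⟨x, hx, rfl⟩
    exact ⟨⟨⟨(x, x), rfl⟩, ⟨hx, hx⟩, rfl⟩, ⟨ra.diagMk x, rfl⟩⟩
  · rintro ⟨⟨p, ⟨hp, -⟩, rfl⟩, ⟨d, hd⟩⟩
    induction d using Quot.ind with | mk q => ?_
    exact ⟨p.1.1, hp, congrArg (Quot.mk ra.diagRel)
      (Subtype.ext (Prod.ext rfl (eq_of_mk_eq_diagMk (z := q.1.1) hd.symm)))⟩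

theorem openSource_imprGroupoid (hprin : ra.IsPrincipal) (hsrc : 𝒢.OpenSource)
    (hopen : ra.OpenAnchor) : (ra.imprGroupoid hprin hsrc).OpenSource := by
  intro U hU
  have himage : ra.imprSrc '' U =
      ra.diagMk '' ((fun p : ra.FibProd => p.1.2) '' (Quot.mk _ ⁻¹' U)) := by
    conv_lhs => rw [← image_preimage_eq U Quot.mk_surjective]
    rw [image_image, image_image]
    rfl
  change ∃ V, IsOpen V ∧ ra.imprSrc '' U = V ∩ range ra.imprRng
  rw [himage]
  exact isOpenOnto_diagMk ra hsrc _ (IsOpenOnto.isOpenMap_pullback_snd hopen ra.continuous_anchor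
    anchor_mem_units _ (hU.preimage continuous_quot_mk))

noncomputable def imprEquivalence [T2Space H] (hprin : ra.IsPrincipal) (hsrc : 𝒢.OpenSource)
    (hopen : ra.OpenAnchor) (hsurj : ra.SurjAnchor) :
    GroupoidEquivalence (ra.imprGroupoid hprin hsrc) 𝒢 X where
  lact := ra.imprLeftAction hprin hsrc
  ract := ra
  commute c x h hcl hcr _ _ := by
    obtain ⟨a, ha, rfl⟩ := exists_eq_mk_of_imprSrc_eq hcl
    have hcr' : ra.anchor (ra.lact (Quot.mk _ ⟨(a, x), ha⟩) x) = 𝒢.rng h := by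
      rw [hprin.1.lact_mk_self]
      exact ha.trans hcr
    refine (tact_of hcr').symm.trans ?_
    change _ = ra.lact _ (ra.act x h hcr)
    rw [← tact_of hcr, hprin.1.lact_mk_tact ha hcr, hprin.1.lact_mk_self]
  lact_principal := ra.isPrincipal_imprLeftAction hprin hsrc
  ract_principal := hprin
  lact_openAnchor := ra.isOpenOnto_diagMk hsrc
  ract_openAnchor := hopen
  lact_surjAnchor := by
    rintro _ ⟨c, rfl⟩
    induction c using Quot.ind with | mk p => exact ⟨p.1.1, rfl⟩
  ract_surjAnchor := hsurj
  ract_anchor_lact _ _ hc := hprin.1.anchor_lact hc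
  ract_anchor_eq_iff x y :=
    ⟨fun hxy => ⟨Quot.mk _ ⟨(x, y), hxy⟩, rfl, hprin.1.lact_mk_self hxy⟩,
      fun ⟨_, hc, he⟩ => he ▸ hprin.1.anchor_lact hc⟩
  lact_anchor_ract x h hc := (congrArg ra.diagMk (tact_of hc).symm).trans (diagMk_tact hc)
  lact_anchor_eq_iff x y := by
    change ra.diagMk x = ra.diagMk y ↔ _
    rw [eq_comm, diagMk_eq_diagMk_iff]
    exact ⟨fun ⟨h, hc, he⟩ => ⟨h, hc, (tact_of hc).symm.trans he⟩,
      fun ⟨h, hc, he⟩ => ⟨h, hc, (tact_of hc).trans he⟩⟩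

end Imprimitivity

end RightGroupoidAction

open RightGroupoidAction

theorem imprimitivity_groupoid_exists_general
    {H X : Type*} [TopologicalSpace H] [TopologicalSpace X]
    [T2Space H] [LocallyCompactSpace X]
    (𝒢 : TopGroupoid H) (hsrc : 𝒢.OpenSource)
    (ra : RightGroupoidAction 𝒢 X)
    (hprin : ra.IsPrincipal) (hopen : ra.OpenAnchor) (hsurj : ra.SurjAnchor) :
    ∃ GG : TopGroupoid (Quot ra.diagRel),
      -- the groupoid structure is the announced one on representatives
      (∀ p : {p : X × X // ra.anchor p.1 = ra.anchor p.2},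
        GG.src (Quot.mk _ p) = Quot.mk _ ⟨(p.1.2, p.1.2), rfl⟩) ∧
      (∀ p : {p : X × X // ra.anchor p.1 = ra.anchor p.2},
        GG.rng (Quot.mk _ p) = Quot.mk _ ⟨(p.1.1, p.1.1), rfl⟩) ∧
      (∀ (x y z : X) (hxy : ra.anchor x = ra.anchor y) (hyz : ra.anchor y = ra.anchor z)
        (hc : GG.src (Quot.mk _ ⟨(x, y), hxy⟩) = GG.rng (Quot.mk _ ⟨(y, z), hyz⟩)),
        GG.mul (Quot.mk _ ⟨(x, y), hxy⟩) (Quot.mk _ ⟨(y, z), hyz⟩) hc =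
          Quot.mk _ ⟨(x, z), hxy.trans hyz⟩) ∧
      (∀ (x y : X) (hxy : ra.anchor x = ra.anchor y),
        GG.inv (Quot.mk _ ⟨(x, y), hxy⟩) = Quot.mk _ ⟨(y, x), hxy.symm⟩) ∧
      -- G is a locally compact Hausdorff groupoid with open source map
      LocallyCompactSpace (Quot ra.diagRel) ∧ T2Space (Quot ra.diagRel) ∧
      GG.OpenSource ∧
      -- G acts freely and properly on the left of X via [x, y^op]·y = x,
      -- with anchor x ↦ [x, x^op]
      ∃ L : LeftGroupoidAction GG X,
        (∀ x : X, L.anchor x = Quot.mk _ ⟨(x, x), rfl⟩) ∧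
        (∀ (x y : X) (hxy : ra.anchor x = ra.anchor y)
          (hc : GG.src (Quot.mk _ ⟨(x, y), hxy⟩) = L.anchor y),
          L.act (Quot.mk _ ⟨(x, y), hxy⟩) y hc = x) ∧
        L.IsPrincipal ∧
        -- and with this structure X is a (G, H)-equivalence
        ∃ Eqv : GroupoidEquivalence GG 𝒢 X, Eqv.lact = L ∧ Eqv.ract = ra :=
  ⟨ra.imprGroupoid hprin hsrc, fun _ => rfl, fun _ => rfl,
    fun _ _ _ hxy hyz _ => hprin.1.imprMul_mk_mk hxy hyz, fun _ _ _ => rfl,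
    locallyCompactSpace_quot hsrc, hprin.t2Space_quot hsrc,
    ra.openSource_imprGroupoid hprin hsrc hopen,
    ra.imprLeftAction hprin hsrc, fun _ => rfl, fun _ _ hxy _ => hprin.1.lact_mk_self hxy,
    ra.isPrincipal_imprLeftAction hprin hsrc, ra.imprEquivalence hprin hsrc hopen hsurj, rfl, rfl⟩

/-- **Lemma (motivation)** (`lem:thm for gpds`, Williams): the imprimitivity groupoid of a
principal `H`-space. -/
theorem imprimitivity_groupoid_exists
    {H X : Type*} [TopologicalSpace H] [TopologicalSpace X]
    [LocallyCompactSpace H] [T2Space H] [LocallyCompactSpace X] [T2Space X]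
    (𝒢 : TopGroupoid H) (hsrc : 𝒢.OpenSource)
    (ra : RightGroupoidAction 𝒢 X)
    (hprin : ra.IsPrincipal) (hopen : ra.OpenAnchor) (hsurj : ra.SurjAnchor) :
    ∃ GG : TopGroupoid (Quot ra.diagRel),
      -- the groupoid structure is the announced one on representatives
      (∀ p : {p : X × X // ra.anchor p.1 = ra.anchor p.2},
        GG.src (Quot.mk _ p) = Quot.mk _ ⟨(p.1.2, p.1.2), rfl⟩) ∧
      (∀ p : {p : X × X // ra.anchor p.1 = ra.anchor p.2},
        GG.rng (Quot.mk _ p) = Quot.mk _ ⟨(p.1.1, p.1.1), rfl⟩) ∧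
      (∀ (x y z : X) (hxy : ra.anchor x = ra.anchor y) (hyz : ra.anchor y = ra.anchor z)
        (hc : GG.src (Quot.mk _ ⟨(x, y), hxy⟩) = GG.rng (Quot.mk _ ⟨(y, z), hyz⟩)),
        GG.mul (Quot.mk _ ⟨(x, y), hxy⟩) (Quot.mk _ ⟨(y, z), hyz⟩) hc =
          Quot.mk _ ⟨(x, z), hxy.trans hyz⟩) ∧
      (∀ (x y : X) (hxy : ra.anchor x = ra.anchor y),
        GG.inv (Quot.mk _ ⟨(x, y), hxy⟩) = Quot.mk _ ⟨(y, x), hxy.symm⟩) ∧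
      -- G is a locally compact Hausdorff groupoid with open source map
      LocallyCompactSpace (Quot ra.diagRel) ∧ T2Space (Quot ra.diagRel) ∧
      GG.OpenSource ∧
      -- G acts freely and properly on the left of X via [x, y^op]·y = x,
      -- with anchor x ↦ [x, x^op]
      ∃ L : LeftGroupoidAction GG X,
        (∀ x : X, L.anchor x = Quot.mk _ ⟨(x, x), rfl⟩) ∧
        (∀ (x y : X) (hxy : ra.anchor x = ra.anchor y)
          (hc : GG.src (Quot.mk _ ⟨(x, y), hxy⟩) = L.anchor y),
          L.act (Quot.mk _ ⟨(x, y), hxy⟩) y hc = x) ∧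
        L.IsPrincipal ∧
        -- and with this structure X is a (G, H)-equivalence
        ∃ Eqv : GroupoidEquivalence GG 𝒢 X, Eqv.lact = L ∧ Eqv.ract = ra :=
  imprimitivity_groupoid_exists_general 𝒢 hsrc ra hprin hopen hsurj
end

section
/- Let X be a (G,H)-equivalence of locally compact Hausdorff groupoids. Then the map X ×_σ,σ X^op → G sending (x,y) with σ(x)=σ(y) to the unique element g ∈ G with g·y = x is continuous, open, and surjective, and it descends to an isomorphism of topological groupoids X ×_H X^op ≅ G. -/
namespace TopGroupoid

variable {G : Type*} [TopologicalSpace G] (𝒢 : TopGroupoid G)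

theorem mul_congr {g g' h h' : G} (eg : g = g') (eh : h = h') (hc : 𝒢.src g = 𝒢.rng h)
    (hc' : 𝒢.src g' = 𝒢.rng h') : 𝒢.mul g h hc = 𝒢.mul g' h' hc' := by
  subst eg eh; rfl

theorem eq_of_inv_mul_eq_src {g g' : G} (hc : 𝒢.src (𝒢.inv g') = 𝒢.rng g)
    (h : 𝒢.mul (𝒢.inv g') g hc = 𝒢.src g') : g = g' := by
  have hrng : 𝒢.rng g = 𝒢.rng g' := hc.symm.trans (𝒢.src_inv g')
  calc g = 𝒢.mul (𝒢.rng g) g (𝒢.src_rng g) := (𝒢.rng_mul' g _).symm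
    _ = 𝒢.mul (𝒢.mul g' (𝒢.inv g') (𝒢.rng_inv g').symm) g
          (by rw [src_mul, src_inv, hrng]) :=
        𝒢.mul_congr ((𝒢.mul_inv g' _).trans hrng.symm).symm rfl _ _
    _ = 𝒢.mul g' (𝒢.mul (𝒢.inv g') g hc) (by rw [rng_mul, rng_inv]) := 𝒢.mul_assoc _ _ _ _ _ _ _
    _ = 𝒢.mul g' (𝒢.src g') (𝒢.rng_src g').symm := 𝒢.mul_congr rfl h _ _
    _ = g' := 𝒢.mul_src g' _

end TopGroupoid

namespace LeftGroupoidAction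

variable {G X : Type*} [TopologicalSpace G] [TopologicalSpace X] {𝒢 : TopGroupoid G}
  (lam : LeftGroupoidAction 𝒢 X)

theorem act_congr {g g' : G} {x x' : X} (eg : g = g') (ex : x = x')
    (hc : 𝒢.src g = lam.anchor x) (hc' : 𝒢.src g' = lam.anchor x') :
    lam.act g x hc = lam.act g' x' hc' := by
  subst eg ex; rfl

theorem src_anchor (x : X) : 𝒢.src (lam.anchor x) = lam.anchor x := by
  rw [← lam.anchor_unit x, 𝒢.src_rng]

theorem inv_act_act (g : G) (x : X) (hc : 𝒢.src g = lam.anchor x)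
    (hc' : 𝒢.src (𝒢.inv g) = lam.anchor (lam.act g x hc)) :
    lam.act (𝒢.inv g) (lam.act g x hc) hc' = x := by
  have hg : 𝒢.src (𝒢.inv g) = 𝒢.rng g := 𝒢.src_inv g
  calc lam.act (𝒢.inv g) (lam.act g x hc) hc'
      = lam.act (𝒢.mul (𝒢.inv g) g hg) x (by rw [𝒢.src_mul, hc]) := lam.act_mul _ _ _ _ _ _ _
    _ = lam.act (lam.anchor x) x (lam.src_anchor x) :=
        lam.act_congr ((𝒢.inv_mul g hg).trans hc) rfl _ _
    _ = x := lam.act_unit x _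

theorem IsFree.eq_of_act_eq {lam : LeftGroupoidAction 𝒢 X} (hfree : lam.IsFree) {g g' : G}
    {x : X} (hc : 𝒢.src g = lam.anchor x) (hc' : 𝒢.src g' = lam.anchor x)
    (he : lam.act g x hc = lam.act g' x hc') : g = g' := by
  have hinv : 𝒢.src (𝒢.inv g') = 𝒢.rng g := by
    rw [𝒢.src_inv, ← lam.anchor_act g' x hc', ← he, lam.anchor_act]
  have hfix : lam.act (𝒢.mul (𝒢.inv g') g hinv) x (by rw [𝒢.src_mul, hc]) = x :=
    calc lam.act (𝒢.mul (𝒢.inv g') g hinv) x _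
        = lam.act (𝒢.inv g') (lam.act g x hc) (by rw [lam.anchor_act, hinv]) :=
          (lam.act_mul _ _ _ _ _ _ _).symm
      _ = lam.act (𝒢.inv g') (lam.act g' x hc') (by rw [lam.anchor_act, 𝒢.src_inv]) :=
          lam.act_congr rfl he _ _
      _ = x := lam.inv_act_act g' x hc' _
  exact 𝒢.eq_of_inv_mul_eq_src hinv ((hfree _ x _ hfix).trans hc'.symm)

theorem SurjAnchor.surjective_fst {lam : LeftGroupoidAction 𝒢 X} (hsurj : lam.SurjAnchor) :
    Function.Surjective (fun p : {p : G × X // 𝒢.src p.1 = lam.anchor p.2} => p.1.1) := by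
  intro g
  obtain ⟨x, hx⟩ := hsurj (𝒢.src g) ⟨𝒢.src g, 𝒢.rng_src g⟩
  exact ⟨⟨(g, x), hx.symm⟩, rfl⟩

theorem OpenAnchor.isOpenMap_fst {lam : LeftGroupoidAction 𝒢 X} (hopen : lam.OpenAnchor) :
    IsOpenMap (fun p : {p : G × X // 𝒢.src p.1 = lam.anchor p.2} => p.1.1) := by
  intro O hO
  rw [isOpen_iff_forall_mem_open]
  rintro _ ⟨⟨⟨g, x⟩, hgx⟩, hgxO, rfl⟩
  obtain ⟨O', hO', rfl⟩ := isOpen_induced_iff.mp hO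
  obtain ⟨U, V, hU, hV, hgU, hxV, hUV⟩ := isOpen_prod_iff.mp hO' g x hgxO
  obtain ⟨W, hW, hVW⟩ := hopen V hV
  refine ⟨U ∩ 𝒢.src ⁻¹' W, ?_, hU.inter (hW.preimage 𝒢.continuous_src), hgU, ?_⟩
  · rintro g' ⟨hg'U, hg'W⟩
    obtain ⟨x', hx'V, hx'⟩ : 𝒢.src g' ∈ lam.anchor '' V :=
      hVW ▸ ⟨hg'W, 𝒢.src g', 𝒢.rng_src g'⟩
    exact ⟨⟨(g', x'), hx'.symm⟩, hUV ⟨hg'U, hx'V⟩, rfl⟩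
  · have hxW : lam.anchor x ∈ W ∩ 𝒢.units := hVW ▸ ⟨x, hxV, rfl⟩
    show 𝒢.src g ∈ W
    exact hgx ▸ hxW.1

end LeftGroupoidAction

namespace GroupoidEquivalence

variable {G H X : Type*} [TopologicalSpace G] [TopologicalSpace H] [TopologicalSpace X]
  {𝒢 : TopGroupoid G} {ℋ : TopGroupoid H} (Eqv : GroupoidEquivalence 𝒢 ℋ X)

theorem lact_act_ract {g : G} {x y : X} {h : H} (hc : 𝒢.src g = Eqv.lact.anchor y)
    (he : Eqv.lact.act g y hc = x) (hr : Eqv.ract.anchor y = ℋ.rng h)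
    (hc' : 𝒢.src g = Eqv.lact.anchor (Eqv.ract.act y h hr))
    (hr' : Eqv.ract.anchor x = ℋ.rng h) :
    Eqv.lact.act g (Eqv.ract.act y h hr) hc' = Eqv.ract.act x h hr' := by
  subst he
  exact (Eqv.commute g y h hc hr hr' hc').symm

def pairMap (p : {p : G × X // 𝒢.src p.1 = Eqv.lact.anchor p.2}) :
    {p : X × X // Eqv.ract.anchor p.1 = Eqv.ract.anchor p.2} :=
  ⟨(Eqv.lact.act p.1.1 p.1.2 p.2, p.1.2), Eqv.ract_anchor_lact _ _ _⟩

theorem pairMap_bijective : Function.Bijective Eqv.pairMap := by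
  constructor
  · rintro ⟨⟨g, x⟩, hc⟩ ⟨⟨g', x'⟩, hc'⟩ he
    obtain rfl : x = x' := congrArg (fun q => q.1.2) he
    obtain rfl : g = g' :=
      Eqv.lact_principal.1.eq_of_act_eq hc hc' (congrArg (fun q => q.1.1) he)
    rfl
  · rintro ⟨⟨x, y⟩, hxy⟩
    obtain ⟨g, hc, rfl⟩ := (Eqv.ract_anchor_eq_iff x y).mp hxy
    exact ⟨⟨(g, y), hc⟩, rfl⟩

theorem continuous_pairMap : Continuous Eqv.pairMap :=
  Eqv.lact_principal.2.continuous.subtype_mk _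

theorem isClosedMap_pairMap : IsClosedMap Eqv.pairMap :=
  Eqv.lact_principal.2.isClosedMap.subtype_mk _

noncomputable def pairHomeomorph :
    {p : G × X // 𝒢.src p.1 = Eqv.lact.anchor p.2} ≃ₜ
      {p : X × X // Eqv.ract.anchor p.1 = Eqv.ract.anchor p.2} :=
  (Equiv.ofBijective _ Eqv.pairMap_bijective).toHomeomorphOfContinuousClosed
    Eqv.continuous_pairMap Eqv.isClosedMap_pairMap

/-- The paper's `_G⟨x, y⟩`. -/
noncomputable def leftInner (x y : X) (h : Eqv.ract.anchor x = Eqv.ract.anchor y) : G :=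
  ((Eqv.ract_anchor_eq_iff x y).mp h).choose

theorem src_leftInner (x y : X) (h : Eqv.ract.anchor x = Eqv.ract.anchor y) :
    𝒢.src (Eqv.leftInner x y h) = Eqv.lact.anchor y :=
  ((Eqv.ract_anchor_eq_iff x y).mp h).choose_spec.choose

theorem leftInner_act (x y : X) (h : Eqv.ract.anchor x = Eqv.ract.anchor y) :
    Eqv.lact.act (Eqv.leftInner x y h) y (Eqv.src_leftInner x y h) = x :=
  ((Eqv.ract_anchor_eq_iff x y).mp h).choose_spec.choose_spec

theorem leftInner_eq_of_act_eq {x y : X} (h : Eqv.ract.anchor x = Eqv.ract.anchor y) {g : G}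
    (hc : 𝒢.src g = Eqv.lact.anchor y) (he : Eqv.lact.act g y hc = x) :
    Eqv.leftInner x y h = g :=
  Eqv.lact_principal.1.eq_of_act_eq _ hc ((Eqv.leftInner_act x y h).trans he.symm)

theorem rng_leftInner (x y : X) (h : Eqv.ract.anchor x = Eqv.ract.anchor y) :
    𝒢.rng (Eqv.leftInner x y h) = Eqv.lact.anchor x := by
  rw [← Eqv.lact.anchor_act _ y (Eqv.src_leftInner x y h), Eqv.leftInner_act]

theorem eq_of_leftInner_eq {x x' y : X} (h : Eqv.ract.anchor x = Eqv.ract.anchor y)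
    (h' : Eqv.ract.anchor x' = Eqv.ract.anchor y)
    (he : Eqv.leftInner x y h = Eqv.leftInner x' y h') : x = x' := by
  rw [← Eqv.leftInner_act x y h, ← Eqv.leftInner_act x' y h']
  exact Eqv.lact.act_congr he rfl _ _

theorem leftInner_ract_ract {x y : X} {h : H} (hx : Eqv.ract.anchor x = ℋ.rng h)
    (hy : Eqv.ract.anchor y = ℋ.rng h)
    (hxy : Eqv.ract.anchor (Eqv.ract.act x h hx) = Eqv.ract.anchor (Eqv.ract.act y h hy)) :
    Eqv.leftInner (Eqv.ract.act x h hx) (Eqv.ract.act y h hy) hxy =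
      Eqv.leftInner x y (hx.trans hy.symm) :=
  Eqv.leftInner_eq_of_act_eq _ (by rw [Eqv.lact_anchor_ract, Eqv.src_leftInner])
    (Eqv.lact_act_ract (Eqv.src_leftInner x y _) (Eqv.leftInner_act x y _) hy _ hx)

theorem leftInner_eq_iff_diagRel
    (p q : {p : X × X // Eqv.ract.anchor p.1 = Eqv.ract.anchor p.2}) :
    Eqv.leftInner p.1.1 p.1.2 p.2 = Eqv.leftInner q.1.1 q.1.2 q.2 ↔ Eqv.ract.diagRel p q := by
  obtain ⟨⟨x₁, x₂⟩, hx⟩ := p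
  obtain ⟨⟨y₁, y₂⟩, hy⟩ := q
  constructor
  · intro he
    have hanchor : Eqv.lact.anchor y₂ = Eqv.lact.anchor x₂ := by
      rw [← Eqv.src_leftInner y₁ y₂ hy, ← he, Eqv.src_leftInner]
    obtain ⟨h, hr, rfl⟩ := (Eqv.lact_anchor_eq_iff y₂ x₂).mp hanchor
    have hr₁ : Eqv.ract.anchor x₁ = ℋ.rng h := hx.trans hr
    refine ⟨h, hr₁, hr, Eqv.eq_of_leftInner_eq hy
      ((Eqv.ract.anchor_act _ _ _).trans (Eqv.ract.anchor_act _ _ _).symm) ?_, rfl⟩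
    rw [Eqv.leftInner_ract_ract hr₁ hr, ← he]
  · rintro ⟨h, hr₁, hr₂, rfl, rfl⟩
    exact (Eqv.leftInner_ract_ract hr₁ hr₂ _).symm

theorem mul_leftInner {x y z : X} (hxy : Eqv.ract.anchor x = Eqv.ract.anchor y)
    (hyz : Eqv.ract.anchor y = Eqv.ract.anchor z)
    (hc : 𝒢.src (Eqv.leftInner x y hxy) = 𝒢.rng (Eqv.leftInner y z hyz)) :
    𝒢.mul (Eqv.leftInner x y hxy) (Eqv.leftInner y z hyz) hc =
      Eqv.leftInner x z (hxy.trans hyz) := by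
  refine (Eqv.leftInner_eq_of_act_eq _ (by rw [𝒢.src_mul, Eqv.src_leftInner]) ?_).symm
  calc Eqv.lact.act (𝒢.mul (Eqv.leftInner x y hxy) (Eqv.leftInner y z hyz) hc) z _
      = Eqv.lact.act (Eqv.leftInner x y hxy)
          (Eqv.lact.act (Eqv.leftInner y z hyz) z (Eqv.src_leftInner y z hyz))
          (by rw [Eqv.leftInner_act, Eqv.src_leftInner]) :=
        (Eqv.lact.act_mul _ _ _ _ _ _ _).symm
    _ = Eqv.lact.act (Eqv.leftInner x y hxy) y (Eqv.src_leftInner x y hxy) :=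
        Eqv.lact.act_congr rfl (Eqv.leftInner_act y z hyz) _ _
    _ = x := Eqv.leftInner_act x y hxy

theorem inv_leftInner {x y : X} (hxy : Eqv.ract.anchor x = Eqv.ract.anchor y) :
    𝒢.inv (Eqv.leftInner x y hxy) = Eqv.leftInner y x hxy.symm := by
  have hc : 𝒢.src (𝒢.inv (Eqv.leftInner x y hxy)) = Eqv.lact.anchor x := by
    rw [𝒢.src_inv, Eqv.rng_leftInner]
  refine (Eqv.leftInner_eq_of_act_eq _ hc ?_).symm
  calc Eqv.lact.act (𝒢.inv (Eqv.leftInner x y hxy)) x hc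
      = Eqv.lact.act (𝒢.inv (Eqv.leftInner x y hxy))
          (Eqv.lact.act (Eqv.leftInner x y hxy) y (Eqv.src_leftInner x y hxy))
          (by rw [Eqv.leftInner_act]; exact hc) :=
        Eqv.lact.act_congr rfl (Eqv.leftInner_act x y hxy).symm _ _
    _ = y := Eqv.lact.inv_act_act _ _ _ _

theorem leftInner_self (x : X) : Eqv.leftInner x x rfl = Eqv.lact.anchor x :=
  Eqv.leftInner_eq_of_act_eq rfl (Eqv.lact.src_anchor x) (Eqv.lact.act_unit x _)

theorem leftInner_eq_fst_comp_pairHomeomorph_symm :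
    (fun q : {p : X × X // Eqv.ract.anchor p.1 = Eqv.ract.anchor p.2} =>
      Eqv.leftInner q.1.1 q.1.2 q.2) =
      (fun p : {p : G × X // 𝒢.src p.1 = Eqv.lact.anchor p.2} => p.1.1) ∘
        Eqv.pairHomeomorph.symm := by
  funext q
  obtain ⟨p, rfl⟩ := Eqv.pairHomeomorph.surjective q
  rw [Function.comp_apply, Homeomorph.symm_apply_apply]
  exact Eqv.leftInner_eq_of_act_eq _ p.2 rfl

theorem continuous_leftInner :
    Continuous (fun q : {p : X × X // Eqv.ract.anchor p.1 = Eqv.ract.anchor p.2} =>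
      Eqv.leftInner q.1.1 q.1.2 q.2) := by
  rw [leftInner_eq_fst_comp_pairHomeomorph_symm]
  exact (continuous_fst.comp continuous_subtype_val).comp Eqv.pairHomeomorph.symm.continuous

theorem isOpenMap_leftInner :
    IsOpenMap (fun q : {p : X × X // Eqv.ract.anchor p.1 = Eqv.ract.anchor p.2} =>
      Eqv.leftInner q.1.1 q.1.2 q.2) := by
  rw [leftInner_eq_fst_comp_pairHomeomorph_symm]
  exact Eqv.lact_openAnchor.isOpenMap_fst.comp Eqv.pairHomeomorph.symm.isOpenMap

theorem surjective_leftInner :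
    Function.Surjective (fun q : {p : X × X // Eqv.ract.anchor p.1 = Eqv.ract.anchor p.2} =>
      Eqv.leftInner q.1.1 q.1.2 q.2) := by
  rw [leftInner_eq_fst_comp_pairHomeomorph_symm]
  exact Eqv.lact_surjAnchor.surjective_fst.comp Eqv.pairHomeomorph.symm.surjective

end GroupoidEquivalence

theorem leoq_isomorphism_general
    {G H X : Type*} [TopologicalSpace G] [TopologicalSpace H] [TopologicalSpace X]
    (𝒢 : TopGroupoid G) (ℋ : TopGroupoid H)
    (Eqv : GroupoidEquivalence 𝒢 ℋ X)
    -- Φ x y is the unique g ∈ G with g·y = x (for σ(x) = σ(y))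
    (Φ : (x y : X) → Eqv.ract.anchor x = Eqv.ract.anchor y → G)
    (hΦs : ∀ x y h, 𝒢.src (Φ x y h) = Eqv.lact.anchor y)
    (hΦact : ∀ x y h, Eqv.lact.act (Φ x y h) y (hΦs x y h) = x) :
    -- the map is continuous, open and surjective …
    Continuous (fun p : {p : X × X // Eqv.ract.anchor p.1 = Eqv.ract.anchor p.2} =>
      Φ p.1.1 p.1.2 p.2) ∧
    IsOpenMap (fun p : {p : X × X // Eqv.ract.anchor p.1 = Eqv.ract.anchor p.2} =>
      Φ p.1.1 p.1.2 p.2) ∧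
    Function.Surjective
      (fun p : {p : X × X // Eqv.ract.anchor p.1 = Eqv.ract.anchor p.2} =>
        Φ p.1.1 p.1.2 p.2) ∧
    -- … and descends to an isomorphism of topological groupoids X ×_H X^op ≅ G:
    -- its fibres are exactly the diagonal H-orbits,
    (∀ p q : {p : X × X // Eqv.ract.anchor p.1 = Eqv.ract.anchor p.2},
      Φ p.1.1 p.1.2 p.2 = Φ q.1.1 q.1.2 q.2 ↔ Eqv.ract.diagRel p q) ∧
    -- it intertwines the imprimitivity groupoid structure with that of G:
    (∀ (x y z : X) (hxy : Eqv.ract.anchor x = Eqv.ract.anchor y)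
      (hyz : Eqv.ract.anchor y = Eqv.ract.anchor z)
      (hc : 𝒢.src (Φ x y hxy) = 𝒢.rng (Φ y z hyz)),
      𝒢.mul (Φ x y hxy) (Φ y z hyz) hc = Φ x z (hxy.trans hyz)) ∧
    (∀ (x y : X) (hxy : Eqv.ract.anchor x = Eqv.ract.anchor y),
      𝒢.inv (Φ x y hxy) = Φ y x hxy.symm) ∧
    (∀ x : X, Φ x x rfl = Eqv.lact.anchor x) := by
  obtain rfl : Φ = Eqv.leftInner := by
    funext x y h
    exact (Eqv.leftInner_eq_of_act_eq h (hΦs x y h) (hΦact x y h)).symm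
  exact ⟨Eqv.continuous_leftInner, Eqv.isOpenMap_leftInner, Eqv.surjective_leftInner,
    Eqv.leftInner_eq_iff_diagRel, fun _ _ _ => Eqv.mul_leftInner, fun _ _ => Eqv.inv_leftInner,
    Eqv.leftInner_self⟩

/-- **Remark 1.1** (`rmk:leoq`): the canonical map `(x, y) ↦ _G⟨x, y⟩` of a groupoid
equivalence is a continuous open surjection which descends to an isomorphism
`X ×_H X^op ≅ G` of topological groupoids. -/
theorem leoq_isomorphism
    {G H X : Type*} [TopologicalSpace G] [TopologicalSpace H] [TopologicalSpace X]
    [LocallyCompactSpace G] [T2Space G] [LocallyCompactSpace H] [T2Space H]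
    [LocallyCompactSpace X] [T2Space X]
    (𝒢 : TopGroupoid G) (ℋ : TopGroupoid H)
    (Eqv : GroupoidEquivalence 𝒢 ℋ X)
    -- Φ x y is the unique g ∈ G with g·y = x (for σ(x) = σ(y))
    (Φ : (x y : X) → Eqv.ract.anchor x = Eqv.ract.anchor y → G)
    (hΦs : ∀ x y h, 𝒢.src (Φ x y h) = Eqv.lact.anchor y)
    (hΦact : ∀ x y h, Eqv.lact.act (Φ x y h) y (hΦs x y h) = x) :
    -- the map is continuous, open and surjective …
    Continuous (fun p : {p : X × X // Eqv.ract.anchor p.1 = Eqv.ract.anchor p.2} =>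
      Φ p.1.1 p.1.2 p.2) ∧
    IsOpenMap (fun p : {p : X × X // Eqv.ract.anchor p.1 = Eqv.ract.anchor p.2} =>
      Φ p.1.1 p.1.2 p.2) ∧
    Function.Surjective
      (fun p : {p : X × X // Eqv.ract.anchor p.1 = Eqv.ract.anchor p.2} =>
        Φ p.1.1 p.1.2 p.2) ∧
    -- … and descends to an isomorphism of topological groupoids X ×_H X^op ≅ G:
    -- its fibres are exactly the diagonal H-orbits,
    (∀ p q : {p : X × X // Eqv.ract.anchor p.1 = Eqv.ract.anchor p.2},
      Φ p.1.1 p.1.2 p.2 = Φ q.1.1 q.1.2 q.2 ↔ Eqv.ract.diagRel p q) ∧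
    -- it intertwines the imprimitivity groupoid structure with that of G:
    (∀ (x y z : X) (hxy : Eqv.ract.anchor x = Eqv.ract.anchor y)
      (hyz : Eqv.ract.anchor y = Eqv.ract.anchor z)
      (hc : 𝒢.src (Φ x y hxy) = 𝒢.rng (Φ y z hyz)),
      𝒢.mul (Φ x y hxy) (Φ y z hyz) hc = Φ x z (hxy.trans hyz)) ∧
    (∀ (x y : X) (hxy : Eqv.ract.anchor x = Eqv.ract.anchor y),
      𝒢.inv (Φ x y hxy) = Φ y x hxy.symm) ∧
    (∀ x : X, Φ x x rfl = Eqv.lact.anchor x) :=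
  leoq_isomorphism_general 𝒢 ℋ Eqv Φ hΦs hΦact
end

section
/- Let X be a groupoid equivalence between G and H, A a Fell bundle over G, B a Fell bundle over H, and M an usc Banach bundle over X that is both a left A-demi-equivalence and a right B-demi-equivalence. Assume: (1) the two actions commute, (a ⊲ m) ⊳ b = a ⊲ (m ⊳ b); (2) each A(ρ(x)) acts on M(x) by B(σ(x))-adjointable operators; (3) the inner products satisfy _A⟨m₁,m₂⟩ ⊲ m₃ = m₁ ⊳ ⟨m₂,m₃⟩_B. Then M is an equivalence between the Fell bundles A and B. -/
/- Statement 10: a two-sided demi-equivalence over a groupoid equivalence, with commuting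
actions, adjointable left action and compatible inner products, is a Fell bundle
equivalence. -/

/-- An upper semicontinuous Banach bundle over a topological space. -/
structure IsUSCBanachBundle {X : Type*} [TopologicalSpace X] (E : X → Type*)
    [∀ x, NormedAddCommGroup (E x)] [∀ x, NormedSpace ℂ (E x)] [∀ x, CompleteSpace (E x)]
    [TopologicalSpace (Σ x, E x)] : Prop where
  cont_proj : Continuous (Sigma.fst : (Σ x, E x) → X)
  open_proj : IsOpenMap (Sigma.fst : (Σ x, E x) → X)
  usc_norm : UpperSemicontinuous (fun m : Σ x, E x => ‖m.2‖)
  cont_add : Continuous (fun p : {q : (Σ x, E x) × (Σ x, E x) // q.1.1 = q.2.1} =>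
    (⟨p.1.1.1, p.1.1.2 + cast (congrArg E p.2).symm p.1.2.2⟩ : Σ x, E x))
  cont_smul : Continuous (fun p : ℂ × (Σ x, E x) => (⟨p.2.1, p.1 • p.2.2⟩ : Σ x, E x))
  zero_criterion : ∀ (F : Filter (Σ x, E x)) (x : X),
    Filter.Tendsto (fun m : Σ x, E x => ‖m.2‖) F (nhds 0) →
      Filter.Tendsto Sigma.fst F (nhds x) → F ≤ nhds (⟨x, 0⟩ : Σ x, E x)

/-- A (saturated) Fell bundle over the topological groupoid `𝒢`: an upper semicontinuous
Banach bundle `Bf` over `H` with a continuous fibred multiplication and involution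
satisfying the Fell bundle axioms, whose fibres over units are C*-algebras and whose fibres
are full (imprimitivity) bimodules. -/
structure FellBundle {H : Type*} [TopologicalSpace H] (𝒢 : TopGroupoid H)
    (Bf : H → Type*) [∀ g, NormedAddCommGroup (Bf g)] [∀ g, NormedSpace ℂ (Bf g)]
    [∀ g, CompleteSpace (Bf g)] [TopologicalSpace (Σ g, Bf g)] : Type _ where
  bundle : IsUSCBanachBundle Bf
  mul : ∀ {g h : H} (hc : 𝒢.src g = 𝒢.rng h), Bf g → Bf h → Bf (𝒢.mul g h hc)
  star' : ∀ {g : H}, Bf g → Bf (𝒢.inv g)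
  mul_add : ∀ {g h} (hc : 𝒢.src g = 𝒢.rng h) (a : Bf g) (b b' : Bf h),
    mul hc a (b + b') = mul hc a b + mul hc a b'
  add_mul : ∀ {g h} (hc : 𝒢.src g = 𝒢.rng h) (a a' : Bf g) (b : Bf h),
    mul hc (a + a') b = mul hc a b + mul hc a' b
  mul_smul : ∀ {g h} (hc : 𝒢.src g = 𝒢.rng h) (c : ℂ) (a : Bf g) (b : Bf h),
    mul hc (c • a) b = c • mul hc a b
  mul_smul' : ∀ {g h} (hc : 𝒢.src g = 𝒢.rng h) (c : ℂ) (a : Bf g) (b : Bf h),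
    mul hc a (c • b) = c • mul hc a b
  norm_mul_le : ∀ {g h} (hc : 𝒢.src g = 𝒢.rng h) (a : Bf g) (b : Bf h),
    ‖mul hc a b‖ ≤ ‖a‖ * ‖b‖
  mul_assoc : ∀ {g h k} (hgh : 𝒢.src g = 𝒢.rng h) (hhk : 𝒢.src h = 𝒢.rng k)
    (h₁ : 𝒢.src (𝒢.mul g h hgh) = 𝒢.rng k) (h₂ : 𝒢.src g = 𝒢.rng (𝒢.mul h k hhk))
    (a : Bf g) (b : Bf h) (c : Bf k),
    HEq (mul h₁ (mul hgh a b) c) (mul h₂ a (mul hhk b c))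
  star_add : ∀ {g} (a b : Bf g), star' (a + b) = star' a + star' b
  star_smul : ∀ {g} (c : ℂ) (a : Bf g), star' (c • a) = (starRingEnd ℂ c) • star' a
  star_star : ∀ {g} (a : Bf g), HEq (star' (star' a)) a
  norm_star : ∀ {g} (a : Bf g), ‖star' a‖ = ‖a‖
  star_mul : ∀ {g h} (hc : 𝒢.src g = 𝒢.rng h)
    (hc' : 𝒢.src (𝒢.inv h) = 𝒢.rng (𝒢.inv g)) (a : Bf g) (b : Bf h),
    HEq (star' (mul hc a b)) (mul hc' (star' b) (star' a))
  cstar_norm : ∀ {g} (hc : 𝒢.src (𝒢.inv g) = 𝒢.rng g) (a : Bf g),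
    ‖mul hc (star' a) a‖ = ‖a‖ ^ 2
  continuous_star : Continuous (fun m : Σ g, Bf g =>
    (⟨𝒢.inv m.1, star' m.2⟩ : Σ g, Bf g))
  continuous_mul : Continuous
    (fun p : {p : (Σ g, Bf g) × (Σ g, Bf g) // 𝒢.src p.1.1 = 𝒢.rng p.2.1} =>
      (⟨𝒢.mul p.1.1.1 p.1.2.1 p.2, mul p.2 p.1.1.2 p.1.2.2⟩ : Σ g, Bf g))
  saturated : ∀ {g h} (hc : 𝒢.src g = 𝒢.rng h),
    Dense ((Submodule.span ℂ {c : Bf (𝒢.mul g h hc) | ∃ a b, c = mul hc a b} :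
      Submodule ℂ (Bf (𝒢.mul g h hc))) : Set (Bf (𝒢.mul g h hc)))

namespace FellBundle

variable {H : Type*} [TopologicalSpace H] {𝒢 : TopGroupoid H}
  {Bf : H → Type*} [∀ g, NormedAddCommGroup (Bf g)] [∀ g, NormedSpace ℂ (Bf g)]
  [∀ g, CompleteSpace (Bf g)] [TopologicalSpace (Σ g, Bf g)]

/-- Positivity in the unit-fibre C*-algebra `Bf u`: an element is nonnegative iff it is of
the form `a* a`. -/
def nonneg (FB : FellBundle 𝒢 Bf) {u : H} (_ : 𝒢.rng u = u) (b : Bf u) : Prop :=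
  ∃ a : Bf u, HEq (FB.mul (𝒢.src_inv u) (FB.star' a) a) b

/-- The order on the unit-fibre C*-algebra `Bf u`. -/
def le (FB : FellBundle 𝒢 Bf) {u : H} (hu : 𝒢.rng u = u) (a b : Bf u) : Prop :=
  FB.nonneg hu (b - a)

/-- The multiplication of the unit-fibre C*-algebra `Bf u` (the Fell bundle multiplication,
recast to land in `Bf u`). -/
def unitMul (FB : FellBundle 𝒢 Bf) {u : H} (hu : 𝒢.rng u = u)
    (hmul : 𝒢.mul u u ((congrArg 𝒢.src hu.symm).trans (𝒢.src_rng u)) = u)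
    (a b : Bf u) : Bf u :=
  cast (congrArg Bf hmul) (FB.mul ((congrArg 𝒢.src hu.symm).trans (𝒢.src_rng u)) a b)

end FellBundle

/-- A right `B`-demi-equivalence over a (principal) right `H`-space `X` (Definition 2.1):
an upper semicontinuous Banach bundle `Mf` over `X` with a right `B`-action covering the
`H`-action on `X` and a continuous `B`-valued inner product satisfying (DE1)–(DE8). -/
structure DemiEquiv {H : Type*} [TopologicalSpace H] {𝒢 : TopGroupoid H}
    {Bf : H → Type*} [∀ g, NormedAddCommGroup (Bf g)] [∀ g, NormedSpace ℂ (Bf g)]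
    [∀ g, CompleteSpace (Bf g)] [TopologicalSpace (Σ g, Bf g)]
    (FB : FellBundle 𝒢 Bf)
    {X : Type*} [TopologicalSpace X] (ra : RightGroupoidAction 𝒢 X)
    (Mf : X → Type*) [∀ x, NormedAddCommGroup (Mf x)] [∀ x, NormedSpace ℂ (Mf x)]
    [∀ x, CompleteSpace (Mf x)] [TopologicalSpace (Σ x, Mf x)] : Type _ where
  bundle : IsUSCBanachBundle Mf
  /-- (DE1) the right action, covering the `H`-action on `X` -/
  ract : ∀ (x : X) (h : H) (hc : ra.anchor x = 𝒢.rng h), Mf x → Bf h → Mf (ra.act x h hc)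
  /-- (DE2) the `B`-valued inner product, covering the map `(x, x·h) ↦ h` -/
  inner : ∀ (x : X) (h : H) (hc : ra.anchor x = 𝒢.rng h),
    Mf x → Mf (ra.act x h hc) → Bf h
  /-- (DE3) sesquilinearity -/
  inner_add_left : ∀ x h hc (m m' : Mf x) n,
    inner x h hc (m + m') n = inner x h hc m n + inner x h hc m' n
  inner_smul_left : ∀ x h hc (c : ℂ) (m : Mf x) n,
    inner x h hc (c • m) n = (starRingEnd ℂ c) • inner x h hc m n
  inner_add_right : ∀ x h hc (m : Mf x) n n',
    inner x h hc m (n + n') = inner x h hc m n + inner x h hc m n'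
  inner_smul_right : ∀ x h hc (c : ℂ) (m : Mf x) n,
    inner x h hc m (c • n) = c • inner x h hc m n
  /-- (DE3) continuity of the inner product -/
  inner_continuous : Continuous
    (fun q : {q : (Σ x, Mf x) × H × (Σ x, Mf x) //
        ∃ hc : ra.anchor q.1.1 = 𝒢.rng q.2.1, q.2.2.1 = ra.act q.1.1 q.2.1 hc} =>
      (⟨q.1.2.1, inner q.1.1.1 q.1.2.1 q.2.choose q.1.1.2
        (cast (congrArg Mf q.2.choose_spec) q.1.2.2.2)⟩ : Σ g, Bf g))
  /-- (DE4) `⟨m₁, m₂ ⊳ b⟩ = ⟨m₁, m₂⟩ b` -/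
  inner_ract : ∀ (x : X) (h k : H) (hc : ra.anchor x = 𝒢.rng h)
    (hck : 𝒢.src h = 𝒢.rng k) (hc₂ : ra.anchor (ra.act x h hc) = 𝒢.rng k)
    (hcmul : ra.anchor x = 𝒢.rng (𝒢.mul h k hck))
    (hacts : ra.act (ra.act x h hc) k hc₂ = ra.act x (𝒢.mul h k hck) hcmul)
    (m₁ : Mf x) (m₂ : Mf (ra.act x h hc)) (b : Bf k),
    inner x (𝒢.mul h k hck) hcmul m₁
        (cast (congrArg Mf hacts) (ract (ra.act x h hc) k hc₂ m₂ b))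
      = FB.mul hck (inner x h hc m₁ m₂) b
  /-- (DE5) `⟨m₁, m₂⟩* = ⟨m₂, m₁⟩` -/
  inner_star : ∀ (x : X) (h : H) (hc : ra.anchor x = 𝒢.rng h)
    (hc' : ra.anchor (ra.act x h hc) = 𝒢.rng (𝒢.inv h))
    (hback : ra.act (ra.act x h hc) (𝒢.inv h) hc' = x)
    (m : Mf x) (n : Mf (ra.act x h hc)),
    FB.star' (inner x h hc m n)
      = inner (ra.act x h hc) (𝒢.inv h) hc' n (cast (congrArg Mf hback.symm) m)
  /-- (DE6) positivity -/
  inner_self_nonneg : ∀ (x : X) (hc : ra.anchor x = 𝒢.rng (ra.anchor x)) (m : Mf x),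
    FB.nonneg (ra.anchor_unit x)
      (inner x (ra.anchor x) hc m (cast (congrArg Mf (ra.act_unit x hc).symm) m))
  /-- (DE6) definiteness -/
  inner_self_eq_zero : ∀ (x : X) (hc : ra.anchor x = 𝒢.rng (ra.anchor x)) (m : Mf x),
    inner x (ra.anchor x) hc m (cast (congrArg Mf (ra.act_unit x hc).symm) m) = 0 → m = 0
  /-- (DE7) compatibility of the norms -/
  norm_eq : ∀ (x : X) (hc : ra.anchor x = 𝒢.rng (ra.anchor x)) (m : Mf x),
    ‖m‖ = Real.sqrt
      ‖inner x (ra.anchor x) hc m (cast (congrArg Mf (ra.act_unit x hc).symm) m)‖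
  /-- (DE8) fibrewise fullness -/
  full : ∀ (x : X) (hc : ra.anchor x = 𝒢.rng (ra.anchor x)),
    Dense ((Submodule.span ℂ {b : Bf (ra.anchor x) | ∃ m n : Mf x,
      b = inner x (ra.anchor x) hc m (cast (congrArg Mf (ra.act_unit x hc).symm) n)} :
        Submodule ℂ (Bf (ra.anchor x))) : Set (Bf (ra.anchor x)))

/-- A left `A`-demi-equivalence over a left `G`-space (the mirror of `DemiEquiv`). -/
structure LeftDemiEquiv {G : Type*} [TopologicalSpace G] {𝒢 : TopGroupoid G}
    {Af : G → Type*} [∀ g, NormedAddCommGroup (Af g)] [∀ g, NormedSpace ℂ (Af g)]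
    [∀ g, CompleteSpace (Af g)] [TopologicalSpace (Σ g, Af g)]
    (FA : FellBundle 𝒢 Af)
    {X : Type*} [TopologicalSpace X] (lam : LeftGroupoidAction 𝒢 X)
    (Mf : X → Type*) [∀ x, NormedAddCommGroup (Mf x)] [∀ x, NormedSpace ℂ (Mf x)]
    [∀ x, CompleteSpace (Mf x)] [TopologicalSpace (Σ x, Mf x)] : Type _ where
  bundle : IsUSCBanachBundle Mf
  /-- the left action, covering the `G`-action on `X` -/
  lact : ∀ (g : G) (x : X) (hc : 𝒢.src g = lam.anchor x), Af g → Mf x → Mf (lam.act g x hc)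
  /-- the `A`-valued inner product `_A⟨m, n⟩`, covering `(g·x, x) ↦ g` -/
  linner : ∀ (g : G) (x : X) (hc : 𝒢.src g = lam.anchor x),
    Mf (lam.act g x hc) → Mf x → Af g
  linner_add_left : ∀ g x hc m m' n,
    linner g x hc (m + m') n = linner g x hc m n + linner g x hc m' n
  linner_smul_left : ∀ g x hc (c : ℂ) m n,
    linner g x hc (c • m) n = c • linner g x hc m n
  linner_add_right : ∀ g x hc m (n n' : Mf x),
    linner g x hc m (n + n') = linner g x hc m n + linner g x hc m n'
  linner_smul_right : ∀ g x hc (c : ℂ) m (n : Mf x),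
    linner g x hc m (c • n) = (starRingEnd ℂ c) • linner g x hc m n
  linner_continuous : Continuous
    (fun p : {p : (Σ x, Mf x) × G × (Σ x, Mf x) //
        ∃ hc : 𝒢.src p.2.1 = lam.anchor p.2.2.1, p.1.1 = lam.act p.2.1 p.2.2.1 hc} =>
      (⟨p.1.2.1, linner p.1.2.1 p.1.2.2.1 p.2.choose
        (cast (congrArg Mf p.2.choose_spec) p.1.1.2) p.1.2.2.2⟩ : Σ g, Af g))
  /-- `_A⟨a ⊲ m₁, m₂⟩ = a · _A⟨m₁, m₂⟩` -/
  linner_lact : ∀ (g' g : G) (x : X) (hc : 𝒢.src g = lam.anchor x)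
    (hc' : 𝒢.src g' = lam.anchor (lam.act g x hc)) (hgg : 𝒢.src g' = 𝒢.rng g)
    (hc'' : 𝒢.src (𝒢.mul g' g hgg) = lam.anchor x)
    (hacts : lam.act g' (lam.act g x hc) hc' = lam.act (𝒢.mul g' g hgg) x hc'')
    (a : Af g') (m₁ : Mf (lam.act g x hc)) (m₂ : Mf x),
    linner (𝒢.mul g' g hgg) x hc''
        (cast (congrArg Mf hacts) (lact g' (lam.act g x hc) hc' a m₁)) m₂
      = FA.mul hgg a (linner g x hc m₁ m₂)
  /-- `_A⟨m, n⟩* = _A⟨n, m⟩` -/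
  linner_star : ∀ (g : G) (x : X) (hc : 𝒢.src g = lam.anchor x)
    (hcinv : 𝒢.src (𝒢.inv g) = lam.anchor (lam.act g x hc))
    (hback : lam.act (𝒢.inv g) (lam.act g x hc) hcinv = x)
    (m : Mf (lam.act g x hc)) (n : Mf x),
    FA.star' (linner g x hc m n)
      = linner (𝒢.inv g) (lam.act g x hc) hcinv (cast (congrArg Mf hback.symm) n) m
  linner_self_nonneg : ∀ (x : X) (hcl : 𝒢.src (lam.anchor x) = lam.anchor x) (m : Mf x),
    FA.nonneg (lam.anchor_unit x)
      (linner (lam.anchor x) x hcl (cast (congrArg Mf (lam.act_unit x hcl).symm) m) m)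
  linner_self_eq_zero : ∀ (x : X) (hcl : 𝒢.src (lam.anchor x) = lam.anchor x) (m : Mf x),
    linner (lam.anchor x) x hcl (cast (congrArg Mf (lam.act_unit x hcl).symm) m) m = 0 →
      m = 0
  norm_eq : ∀ (x : X) (hcl : 𝒢.src (lam.anchor x) = lam.anchor x) (m : Mf x),
    ‖m‖ = Real.sqrt
      ‖linner (lam.anchor x) x hcl (cast (congrArg Mf (lam.act_unit x hcl).symm) m) m‖
  full : ∀ (x : X) (hcl : 𝒢.src (lam.anchor x) = lam.anchor x),
    Dense ((Submodule.span ℂ {a : Af (lam.anchor x) | ∃ m n : Mf x,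
      a = linner (lam.anchor x) x hcl (cast (congrArg Mf (lam.act_unit x hcl).symm) m) n} :
        Submodule ℂ (Af (lam.anchor x))) : Set (Af (lam.anchor x)))

section Compatibility

variable {G H : Type*} [TopologicalSpace G] [TopologicalSpace H]
  {𝒢 : TopGroupoid G} {ℋ : TopGroupoid H}
  {Af : G → Type*} [∀ g, NormedAddCommGroup (Af g)] [∀ g, NormedSpace ℂ (Af g)]
  [∀ g, CompleteSpace (Af g)] [TopologicalSpace (Σ g, Af g)]
  {Bf : H → Type*} [∀ h, NormedAddCommGroup (Bf h)] [∀ h, NormedSpace ℂ (Bf h)]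
  [∀ h, CompleteSpace (Bf h)] [TopologicalSpace (Σ h, Bf h)]
  {FA : FellBundle 𝒢 Af} {FB : FellBundle ℋ Bf}
  {X : Type*} [TopologicalSpace X]
  {lam : LeftGroupoidAction 𝒢 X} {ra : RightGroupoidAction ℋ X}
  {Mf : X → Type*} [∀ x, NormedAddCommGroup (Mf x)] [∀ x, NormedSpace ℂ (Mf x)]
  [∀ x, CompleteSpace (Mf x)] [TopologicalSpace (Σ x, Mf x)]

/-- The left `A`-action and right `B`-action on `M` commute: `(a ⊲ m) ⊳ b = a ⊲ (m ⊳ b)`. -/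
def ActionsCommute (LD : LeftDemiEquiv FA lam Mf) (RD : DemiEquiv FB ra Mf) : Prop :=
  ∀ (g : G) (x : X) (h : H) (hcl : 𝒢.src g = lam.anchor x)
    (hcr : ra.anchor x = ℋ.rng h)
    (hcr' : ra.anchor (lam.act g x hcl) = ℋ.rng h)
    (hcl' : 𝒢.src g = lam.anchor (ra.act x h hcr))
    (hcomm : ra.act (lam.act g x hcl) h hcr' = lam.act g (ra.act x h hcr) hcl')
    (a : Af g) (m : Mf x) (b : Bf h),
    cast (congrArg Mf hcomm)
        (RD.ract (lam.act g x hcl) h hcr' (LD.lact g x hcl a m) b)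
      = LD.lact g (ra.act x h hcr) hcl' a (RD.ract x h hcr m b)

/-- `A(ρ(x))` acts on `M(x)` by `B(σ(x))`-adjointable operators:
`⟨a ⊲ m₁, m₂⟩_B = ⟨m₁, a* ⊲ m₂⟩_B`. -/
def LeftActionAdjointable (LD : LeftDemiEquiv FA lam Mf) (RD : DemiEquiv FB ra Mf) : Prop :=
  ∀ (x : X) (hcu : ra.anchor x = ℋ.rng (ra.anchor x))
    (hcl : 𝒢.src (lam.anchor x) = lam.anchor x)
    (hinv : 𝒢.inv (lam.anchor x) = lam.anchor x)
    (a : Af (lam.anchor x)) (m₁ m₂ : Mf x),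
    RD.inner x (ra.anchor x) hcu
        (cast (congrArg Mf (lam.act_unit x hcl)) (LD.lact (lam.anchor x) x hcl a m₁))
        (cast (congrArg Mf (ra.act_unit x hcu).symm) m₂)
      = RD.inner x (ra.anchor x) hcu m₁
          (cast (congrArg Mf (ra.act_unit x hcu).symm)
            (cast (congrArg Mf (lam.act_unit x hcl))
              (LD.lact (lam.anchor x) x hcl
                (cast (congrArg Af hinv) (FA.star' a)) m₂)))

/-- `B(σ(x))` acts on `M(x)` by `A(ρ(x))`-adjointable operators:
`_A⟨m₁ ⊳ b, m₂⟩ = _A⟨m₁, m₂ ⊳ b*⟩`. -/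
def RightActionAdjointable (LD : LeftDemiEquiv FA lam Mf) (RD : DemiEquiv FB ra Mf) :
    Prop :=
  ∀ (x : X) (hcu : ra.anchor x = ℋ.rng (ra.anchor x))
    (hcl : 𝒢.src (lam.anchor x) = lam.anchor x)
    (hinv : ℋ.inv (ra.anchor x) = ra.anchor x)
    (b : Bf (ra.anchor x)) (m₁ m₂ : Mf x),
    LD.linner (lam.anchor x) x hcl
        (cast (congrArg Mf (lam.act_unit x hcl).symm)
          (cast (congrArg Mf (ra.act_unit x hcu)) (RD.ract x (ra.anchor x) hcu m₁ b)))
        m₂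
      = LD.linner (lam.anchor x) x hcl
          (cast (congrArg Mf (lam.act_unit x hcl).symm) m₁)
          (cast (congrArg Mf (ra.act_unit x hcu))
            (RD.ract x (ra.anchor x) hcu m₂ (cast (congrArg Bf hinv) (FB.star' b))))

/-- Compatibility of the two inner products: `_A⟨m₁, m₂⟩ ⊲ m₃ = m₁ ⊳ ⟨m₂, m₃⟩_B`. -/
def InnerCompat (LD : LeftDemiEquiv FA lam Mf) (RD : DemiEquiv FB ra Mf) : Prop :=
  ∀ (g : G) (x : X) (k : H) (hcl : 𝒢.src g = lam.anchor x)
    (hcr : ra.anchor x = ℋ.rng k)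
    (hcr' : ra.anchor (lam.act g x hcl) = ℋ.rng k)
    (hcl' : 𝒢.src g = lam.anchor (ra.act x k hcr))
    (hcomm : ra.act (lam.act g x hcl) k hcr' = lam.act g (ra.act x k hcr) hcl')
    (m₁ : Mf (lam.act g x hcl)) (m₂ : Mf x) (m₃ : Mf (ra.act x k hcr)),
    LD.lact g (ra.act x k hcr) hcl' (LD.linner g x hcl m₁ m₂) m₃
      = cast (congrArg Mf hcomm) (RD.ract (lam.act g x hcl) k hcr' m₁ (RD.inner x k hcr m₂ m₃))

/-- A Fell bundle equivalence in the sense of Muhly–Williams: a two-sided demi-equivalence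
with commuting actions, compatible inner products, and adjointable actions (so that every
fibre is an imprimitivity bimodule). -/
structure FellBundleEquivalence (FA : FellBundle 𝒢 Af) (FB : FellBundle ℋ Bf)
    (lam : LeftGroupoidAction 𝒢 X) (ra : RightGroupoidAction ℋ X)
    (Mf : X → Type*) [∀ x, NormedAddCommGroup (Mf x)] [∀ x, NormedSpace ℂ (Mf x)]
    [∀ x, CompleteSpace (Mf x)] [TopologicalSpace (Σ x, Mf x)] : Type _ where
  left : LeftDemiEquiv FA lam Mf
  right : DemiEquiv FB ra Mf
  commute : ActionsCommute left right
  compat : InnerCompat left right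
  left_adjointable : LeftActionAdjointable left right
  right_adjointable : RightActionAdjointable left right

end Compatibility

/-! ### Auxiliary material for Proposition 2.4 -/

section TSDEHelpers

theorem tsde_cast_add {ι : Type*} {F : ι → Type*} [∀ i, NormedAddCommGroup (F i)]
    {i j : ι} (e : i = j) (a b : F i) :
    cast (congrArg F e) (a + b) = cast (congrArg F e) a + cast (congrArg F e) b := by
  subst e; rfl

theorem tsde_cast_sub {ι : Type*} {F : ι → Type*} [∀ i, NormedAddCommGroup (F i)]
    {i j : ι} (e : i = j) (a b : F i) :
    cast (congrArg F e) (a - b) = cast (congrArg F e) a - cast (congrArg F e) b := by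
  subst e; rfl

theorem tsde_cast_smul {ι : Type*} {F : ι → Type*} [∀ i, NormedAddCommGroup (F i)]
    [∀ i, NormedSpace ℂ (F i)] {i j : ι} (e : i = j) (c : ℂ) (a : F i) :
    cast (congrArg F e) (c • a) = c • cast (congrArg F e) a := by
  subst e; rfl

theorem tsde_heq_norm {ι : Type*} {F : ι → Type*} [∀ i, NormedAddCommGroup (F i)]
    {i j : ι} (e : i = j) {a : F i} {b : F j} (h : HEq a b) : ‖a‖ = ‖b‖ := by
  subst e; rw [eq_of_heq h]

/-! #### Elementary groupoid facts -/

theorem tsde_gmul_congr {G : Type*} [TopologicalSpace G] (𝒢 : TopGroupoid G)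
    {g g' h h' : G} (eg : g = g') (eh : h = h') (hc : 𝒢.src g = 𝒢.rng h)
    (hc' : 𝒢.src g' = 𝒢.rng h') : 𝒢.mul g h hc = 𝒢.mul g' h' hc' := by
  subst eg; subst eh; rfl

theorem tsde_src_unit {G : Type*} [TopologicalSpace G] (𝒢 : TopGroupoid G)
    {u : G} (hru : 𝒢.rng u = u) : 𝒢.src u = u := by
  conv_lhs => rw [← hru]
  rw [𝒢.src_rng, hru]

theorem tsde_mul_unit {G : Type*} [TopologicalSpace G] (𝒢 : TopGroupoid G)
    {u : G} (hru : 𝒢.rng u = u) (hc : 𝒢.src u = 𝒢.rng u) : 𝒢.mul u u hc = u := by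
  have hsu : 𝒢.src u = u := tsde_src_unit 𝒢 hru
  have h2 : 𝒢.src u = 𝒢.rng (𝒢.src u) := by rw [hsu]; exact hru.symm
  exact (tsde_gmul_congr 𝒢 rfl hsu.symm hc h2).trans (𝒢.mul_src u h2)

theorem tsde_inv_unit {G : Type*} [TopologicalSpace G] (𝒢 : TopGroupoid G)
    {u : G} (hru : 𝒢.rng u = u) : 𝒢.inv u = u := by
  have hsu : 𝒢.src u = u := tsde_src_unit 𝒢 hru
  have h1 : 𝒢.src (𝒢.inv u) = 𝒢.rng u := 𝒢.src_inv u
  have h2 : 𝒢.src (𝒢.inv u) = 𝒢.rng (𝒢.src (𝒢.inv u)) := by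
    rw [h1, hru]; exact hru.symm
  have h3 : 𝒢.src (𝒢.inv u) = 𝒢.rng u := h1
  have e1 := 𝒢.mul_src (𝒢.inv u) h2
  have e2 := 𝒢.inv_mul u h3
  have e3 : 𝒢.mul (𝒢.inv u) (𝒢.src (𝒢.inv u)) h2 = 𝒢.mul (𝒢.inv u) u h3 :=
    tsde_gmul_congr 𝒢 rfl (h1.trans hru) h2 h3
  rw [← e1, e3, e2, hsu]

/-! #### Congruence lemmas for actions -/

theorem tsde_ract_congr {H : Type*} [TopologicalSpace H] {ℋ : TopGroupoid H}
    {X : Type*} [TopologicalSpace X] (ra : RightGroupoidAction ℋ X)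
    {x x' : X} (ex : x = x') {h h' : H} (eh : h = h')
    (hc : ra.anchor x = ℋ.rng h) (hc' : ra.anchor x' = ℋ.rng h') :
    ra.act x h hc = ra.act x' h' hc' := by
  subst ex; subst eh; rfl

theorem tsde_lact_congr {G : Type*} [TopologicalSpace G] {𝒢 : TopGroupoid G}
    {X : Type*} [TopologicalSpace X] (lam : LeftGroupoidAction 𝒢 X)
    {g g' : G} (eg : g = g') {x x' : X} (ex : x = x')
    (hc : 𝒢.src g = lam.anchor x) (hc' : 𝒢.src g' = lam.anchor x') :
    lam.act g x hc = lam.act g' x' hc' := by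
  subst eg; subst ex; rfl

/-! #### HEq congruence lemmas for Fell bundle operations -/

theorem tsde_FBmul_heq {H : Type*} [TopologicalSpace H] {ℋ : TopGroupoid H}
    {Bf : H → Type*} [∀ h, NormedAddCommGroup (Bf h)] [∀ h, NormedSpace ℂ (Bf h)]
    [∀ h, CompleteSpace (Bf h)] [TopologicalSpace (Σ h, Bf h)]
    (FB : FellBundle ℋ Bf) {g g' h h' : H} (eg : g = g') (eh : h = h')
    (hc : ℋ.src g = ℋ.rng h) (hc' : ℋ.src g' = ℋ.rng h')
    {a : Bf g} {a' : Bf g'} (ha : HEq a a') {b : Bf h} {b' : Bf h'} (hb : HEq b b') :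
    HEq (FB.mul hc a b) (FB.mul hc' a' b') := by
  subst eg; subst eh
  have h1 := eq_of_heq ha; subst h1
  have h2 := eq_of_heq hb; subst h2
  exact HEq.rfl

theorem tsde_FBstar_heq {H : Type*} [TopologicalSpace H] {ℋ : TopGroupoid H}
    {Bf : H → Type*} [∀ h, NormedAddCommGroup (Bf h)] [∀ h, NormedSpace ℂ (Bf h)]
    [∀ h, CompleteSpace (Bf h)] [TopologicalSpace (Σ h, Bf h)]
    (FB : FellBundle ℋ Bf) {g g' : H} (e : g = g')
    {b : Bf g} {b' : Bf g'} (hb : HEq b b') : HEq (FB.star' b) (FB.star' b') := by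
  subst e
  have h1 := eq_of_heq hb; subst h1
  exact HEq.rfl

/-! #### HEq congruence lemmas for demi-equivalence operations -/

theorem DemiEquiv.ract_heq {H : Type*} [TopologicalSpace H] {ℋ : TopGroupoid H}
    {Bf : H → Type*} [∀ h, NormedAddCommGroup (Bf h)] [∀ h, NormedSpace ℂ (Bf h)]
    [∀ h, CompleteSpace (Bf h)] [TopologicalSpace (Σ h, Bf h)] {FB : FellBundle ℋ Bf}
    {X : Type*} [TopologicalSpace X] {ra : RightGroupoidAction ℋ X}
    {Mf : X → Type*} [∀ x, NormedAddCommGroup (Mf x)] [∀ x, NormedSpace ℂ (Mf x)]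
    [∀ x, CompleteSpace (Mf x)] [TopologicalSpace (Σ x, Mf x)]
    (RD : DemiEquiv FB ra Mf) {x x' : X} (ex : x = x') {h h' : H} (eh : h = h')
    (hc : ra.anchor x = ℋ.rng h) (hc' : ra.anchor x' = ℋ.rng h')
    {m : Mf x} {m' : Mf x'} (hm : HEq m m') {b : Bf h} {b' : Bf h'} (hb : HEq b b') :
    HEq (RD.ract x h hc m b) (RD.ract x' h' hc' m' b') := by
  subst ex; subst eh
  have h1 := eq_of_heq hm; subst h1
  have h2 := eq_of_heq hb; subst h2
  exact HEq.rfl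

theorem DemiEquiv.inner_heq {H : Type*} [TopologicalSpace H] {ℋ : TopGroupoid H}
    {Bf : H → Type*} [∀ h, NormedAddCommGroup (Bf h)] [∀ h, NormedSpace ℂ (Bf h)]
    [∀ h, CompleteSpace (Bf h)] [TopologicalSpace (Σ h, Bf h)] {FB : FellBundle ℋ Bf}
    {X : Type*} [TopologicalSpace X] {ra : RightGroupoidAction ℋ X}
    {Mf : X → Type*} [∀ x, NormedAddCommGroup (Mf x)] [∀ x, NormedSpace ℂ (Mf x)]
    [∀ x, CompleteSpace (Mf x)] [TopologicalSpace (Σ x, Mf x)]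
    (RD : DemiEquiv FB ra Mf) {x x' : X} (ex : x = x') {h h' : H} (eh : h = h')
    (hc : ra.anchor x = ℋ.rng h) (hc' : ra.anchor x' = ℋ.rng h')
    {m : Mf x} {m' : Mf x'} (hm : HEq m m')
    {n : Mf (ra.act x h hc)} {n' : Mf (ra.act x' h' hc')} (hn : HEq n n') :
    HEq (RD.inner x h hc m n) (RD.inner x' h' hc' m' n') := by
  subst ex; subst eh
  have h1 := eq_of_heq hm; subst h1
  have h2 : n = n' := eq_of_heq hn
  subst h2
  exact HEq.rfl

theorem LeftDemiEquiv.lact_heq {G : Type*} [TopologicalSpace G] {𝒢 : TopGroupoid G}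
    {Af : G → Type*} [∀ g, NormedAddCommGroup (Af g)] [∀ g, NormedSpace ℂ (Af g)]
    [∀ g, CompleteSpace (Af g)] [TopologicalSpace (Σ g, Af g)] {FA : FellBundle 𝒢 Af}
    {X : Type*} [TopologicalSpace X] {lam : LeftGroupoidAction 𝒢 X}
    {Mf : X → Type*} [∀ x, NormedAddCommGroup (Mf x)] [∀ x, NormedSpace ℂ (Mf x)]
    [∀ x, CompleteSpace (Mf x)] [TopologicalSpace (Σ x, Mf x)]
    (LD : LeftDemiEquiv FA lam Mf) {g g' : G} (eg : g = g') {x x' : X} (ex : x = x')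
    (hc : 𝒢.src g = lam.anchor x) (hc' : 𝒢.src g' = lam.anchor x')
    {a : Af g} {a' : Af g'} (ha : HEq a a') {m : Mf x} {m' : Mf x'} (hm : HEq m m') :
    HEq (LD.lact g x hc a m) (LD.lact g' x' hc' a' m') := by
  subst eg; subst ex
  have h1 := eq_of_heq ha; subst h1
  have h2 := eq_of_heq hm; subst h2
  exact HEq.rfl

theorem LeftDemiEquiv.linner_heq {G : Type*} [TopologicalSpace G] {𝒢 : TopGroupoid G}
    {Af : G → Type*} [∀ g, NormedAddCommGroup (Af g)] [∀ g, NormedSpace ℂ (Af g)]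
    [∀ g, CompleteSpace (Af g)] [TopologicalSpace (Σ g, Af g)] {FA : FellBundle 𝒢 Af}
    {X : Type*} [TopologicalSpace X] {lam : LeftGroupoidAction 𝒢 X}
    {Mf : X → Type*} [∀ x, NormedAddCommGroup (Mf x)] [∀ x, NormedSpace ℂ (Mf x)]
    [∀ x, CompleteSpace (Mf x)] [TopologicalSpace (Σ x, Mf x)]
    (LD : LeftDemiEquiv FA lam Mf) {g g' : G} (eg : g = g') {x x' : X} (ex : x = x')
    (hc : 𝒢.src g = lam.anchor x) (hc' : 𝒢.src g' = lam.anchor x')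
    {m : Mf (lam.act g x hc)} {m' : Mf (lam.act g' x' hc')} (hm : HEq m m')
    {n : Mf x} {n' : Mf x'} (hn : HEq n n') :
    HEq (LD.linner g x hc m n) (LD.linner g' x' hc' m' n') := by
  subst eg; subst ex
  have h2 : m = m' := eq_of_heq hm
  subst h2
  have h1 := eq_of_heq hn; subst h1
  exact HEq.rfl

end TSDEHelpers

section TSDEUnitFiber

variable {G H : Type*} [TopologicalSpace G] [TopologicalSpace H]
  {𝒢 : TopGroupoid G} {ℋ : TopGroupoid H}
  {Af : G → Type*} [∀ g, NormedAddCommGroup (Af g)] [∀ g, NormedSpace ℂ (Af g)]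
  [∀ g, CompleteSpace (Af g)] [TopologicalSpace (Σ g, Af g)]
  {Bf : H → Type*} [∀ h, NormedAddCommGroup (Bf h)] [∀ h, NormedSpace ℂ (Bf h)]
  [∀ h, CompleteSpace (Bf h)] [TopologicalSpace (Σ h, Bf h)]
  {FA : FellBundle 𝒢 Af} {FB : FellBundle ℋ Bf}
  {X : Type*} [TopologicalSpace X]
  {lam : LeftGroupoidAction 𝒢 X} {ra : RightGroupoidAction ℋ X}
  {Mf : X → Type*} [∀ x, NormedAddCommGroup (Mf x)] [∀ x, NormedSpace ℂ (Mf x)]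
  [∀ x, CompleteSpace (Mf x)] [TopologicalSpace (Σ x, Mf x)]

/-! Unit-fibre facts for the right anchor. -/

theorem uHB1 (ra : RightGroupoidAction ℋ X) (x : X) :
    ℋ.src (ra.anchor x) = ℋ.rng (ra.anchor x) :=
  (tsde_src_unit ℋ (ra.anchor_unit x)).trans (ra.anchor_unit x).symm

theorem uHB2 (ra : RightGroupoidAction ℋ X) (x : X) :
    ℋ.mul (ra.anchor x) (ra.anchor x) (uHB1 ra x) = ra.anchor x :=
  tsde_mul_unit ℋ (ra.anchor_unit x) (uHB1 ra x)

theorem uHB3 (ra : RightGroupoidAction ℋ X) (x : X) :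
    ℋ.inv (ra.anchor x) = ra.anchor x :=
  tsde_inv_unit ℋ (ra.anchor_unit x)

theorem uEB (ra : RightGroupoidAction ℋ X) (x : X) :
    ra.act x (ra.anchor x) (ra.anchor_unit x).symm = x :=
  ra.act_unit x (ra.anchor_unit x).symm

/-! Unit-fibre facts for the left anchor. -/

theorem uGA1 (lam : LeftGroupoidAction 𝒢 X) (x : X) :
    𝒢.src (lam.anchor x) = lam.anchor x :=
  tsde_src_unit 𝒢 (lam.anchor_unit x)

theorem uGA2 (lam : LeftGroupoidAction 𝒢 X) (x : X) :
    𝒢.src (lam.anchor x) = 𝒢.rng (lam.anchor x) :=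
  (uGA1 lam x).trans (lam.anchor_unit x).symm

theorem uGA3 (lam : LeftGroupoidAction 𝒢 X) (x : X) :
    𝒢.mul (lam.anchor x) (lam.anchor x) (uGA2 lam x) = lam.anchor x :=
  tsde_mul_unit 𝒢 (lam.anchor_unit x) (uGA2 lam x)

theorem uGA4 (lam : LeftGroupoidAction 𝒢 X) (x : X) :
    𝒢.inv (lam.anchor x) = lam.anchor x :=
  tsde_inv_unit 𝒢 (lam.anchor_unit x)

theorem uEA (lam : LeftGroupoidAction 𝒢 X) (x : X) :
    lam.act (lam.anchor x) x (uGA1 lam x) = x :=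
  lam.act_unit x (uGA1 lam x)

/-! Unit-fibre operations. -/

def uRact (RD : DemiEquiv FB ra Mf) (x : X) (m : Mf x) (b : Bf (ra.anchor x)) : Mf x :=
  cast (congrArg Mf (uEB ra x)) (RD.ract x (ra.anchor x) (ra.anchor_unit x).symm m b)

def uInner (RD : DemiEquiv FB ra Mf) (x : X) (m n : Mf x) : Bf (ra.anchor x) :=
  RD.inner x (ra.anchor x) (ra.anchor_unit x).symm m
    (cast (congrArg Mf (uEB ra x).symm) n)

def uBmul (FB : FellBundle ℋ Bf) (ra : RightGroupoidAction ℋ X) (x : X)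
    (b c : Bf (ra.anchor x)) : Bf (ra.anchor x) :=
  cast (congrArg Bf (uHB2 ra x)) (FB.mul (uHB1 ra x) b c)

def uBstar (FB : FellBundle ℋ Bf) (ra : RightGroupoidAction ℋ X) (x : X)
    (b : Bf (ra.anchor x)) : Bf (ra.anchor x) :=
  cast (congrArg Bf (uHB3 ra x)) (FB.star' b)

def uLact (LD : LeftDemiEquiv FA lam Mf) (x : X) (a : Af (lam.anchor x)) (m : Mf x) :
    Mf x :=
  cast (congrArg Mf (uEA lam x)) (LD.lact (lam.anchor x) x (uGA1 lam x) a m)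

def uLinner (LD : LeftDemiEquiv FA lam Mf) (x : X) (m n : Mf x) : Af (lam.anchor x) :=
  LD.linner (lam.anchor x) x (uGA1 lam x) (cast (congrArg Mf (uEA lam x).symm) m) n

def uAmul (FA : FellBundle 𝒢 Af) (lam : LeftGroupoidAction 𝒢 X) (x : X)
    (a c : Af (lam.anchor x)) : Af (lam.anchor x) :=
  cast (congrArg Af (uGA3 lam x)) (FA.mul (uGA2 lam x) a c)

def uAstar (FA : FellBundle 𝒢 Af) (lam : LeftGroupoidAction 𝒢 X) (x : X)
    (a : Af (lam.anchor x)) : Af (lam.anchor x) :=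
  cast (congrArg Af (uGA4 lam x)) (FA.star' a)

end TSDEUnitFiber

section TSDEUnitLemmas

variable {G H : Type*} [TopologicalSpace G] [TopologicalSpace H]
  {𝒢 : TopGroupoid G} {ℋ : TopGroupoid H}
  {Af : G → Type*} [∀ g, NormedAddCommGroup (Af g)] [∀ g, NormedSpace ℂ (Af g)]
  [∀ g, CompleteSpace (Af g)] [TopologicalSpace (Σ g, Af g)]
  {Bf : H → Type*} [∀ h, NormedAddCommGroup (Bf h)] [∀ h, NormedSpace ℂ (Bf h)]
  [∀ h, CompleteSpace (Bf h)] [TopologicalSpace (Σ h, Bf h)]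
  {FA : FellBundle 𝒢 Af} {FB : FellBundle ℋ Bf}
  {X : Type*} [TopologicalSpace X]
  {lam : LeftGroupoidAction 𝒢 X} {ra : RightGroupoidAction ℋ X}
  {Mf : X → Type*} [∀ x, NormedAddCommGroup (Mf x)] [∀ x, NormedSpace ℂ (Mf x)]
  [∀ x, CompleteSpace (Mf x)] [TopologicalSpace (Σ x, Mf x)]

/-- (L1) `⟨m, n ⊳ b⟩ = ⟨m, n⟩ · b` at the unit fibre. -/
theorem uInner_ract (RD : DemiEquiv FB ra Mf) (x : X) (m n : Mf x)
    (b : Bf (ra.anchor x)) :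
    uInner RD x m (uRact RD x n b) = uBmul FB ra x (uInner RD x m n) b := by
  unfold uInner uRact uBmul
  have hcu : ra.anchor x = ℋ.rng (ra.anchor x) := (ra.anchor_unit x).symm
  have hc₂ : ra.anchor (ra.act x (ra.anchor x) hcu) = ℋ.rng (ra.anchor x) :=
    (ra.anchor_act x (ra.anchor x) hcu).trans (uHB1 ra x)
  have hcmul : ra.anchor x = ℋ.rng (ℋ.mul (ra.anchor x) (ra.anchor x) (uHB1 ra x)) :=
    hcu.trans (congrArg ℋ.rng (uHB2 ra x)).symm
  have hacts : ra.act (ra.act x (ra.anchor x) hcu) (ra.anchor x) hc₂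
      = ra.act x (ℋ.mul (ra.anchor x) (ra.anchor x) (uHB1 ra x)) hcmul :=
    tsde_ract_congr ra (uEB ra x) (uHB2 ra x).symm hc₂ hcmul
  have de4 := RD.inner_ract x (ra.anchor x) (ra.anchor x) hcu (uHB1 ra x) hc₂ hcmul hacts
    m (cast (congrArg Mf (uEB ra x).symm) n) b
  refine eq_of_heq (HEq.trans ?h1 (HEq.trans (heq_of_eq de4) ?h2))
  · refine RD.inner_heq rfl (uHB2 ra x).symm hcu hcmul HEq.rfl ?_
    refine HEq.trans (cast_heq _ _) (HEq.trans (cast_heq _ _) ?_)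
    exact HEq.trans
      (RD.ract_heq (uEB ra x).symm rfl hcu hc₂ (cast_heq _ _).symm HEq.rfl)
      (cast_heq _ _).symm
  · exact (cast_heq _ _).symm

/-- (L2) `⟨m, n⟩* = ⟨n, m⟩` at the unit fibre. -/
theorem uInner_star (RD : DemiEquiv FB ra Mf) (x : X) (m n : Mf x) :
    uBstar FB ra x (uInner RD x m n) = uInner RD x n m := by
  unfold uInner uBstar
  have hcu : ra.anchor x = ℋ.rng (ra.anchor x) := (ra.anchor_unit x).symm
  have hc' : ra.anchor (ra.act x (ra.anchor x) hcu) = ℋ.rng (ℋ.inv (ra.anchor x)) :=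
    ((ra.anchor_act x (ra.anchor x) hcu).trans
      (tsde_src_unit ℋ (ra.anchor_unit x))).trans
      (((ℋ.rng_inv (ra.anchor x)).trans (tsde_src_unit ℋ (ra.anchor_unit x))).symm)
  have hback : ra.act (ra.act x (ra.anchor x) hcu) (ℋ.inv (ra.anchor x)) hc' = x :=
    (tsde_ract_congr ra (uEB ra x) (uHB3 ra x) hc' hcu).trans (uEB ra x)
  have de5 := RD.inner_star x (ra.anchor x) hcu hc' hback m
    (cast (congrArg Mf (uEB ra x).symm) n)
  refine eq_of_heq (HEq.trans (cast_heq _ _) (HEq.trans (heq_of_eq de5) ?_))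
  exact RD.inner_heq (uEB ra x) (uHB3 ra x) hc' hcu (cast_heq _ _)
    ((cast_heq _ _).trans (cast_heq _ _).symm)

/-- (L3) the unit-fibre inner product is subtractive in the second variable. -/
theorem uInner_sub (RD : DemiEquiv FB ra Mf) (x : X) (m n n' : Mf x) :
    uInner RD x m (n - n') = uInner RD x m n - uInner RD x m n' := by
  have key : ∀ p q : Mf (ra.act x (ra.anchor x) (ra.anchor_unit x).symm),
      RD.inner x (ra.anchor x) (ra.anchor_unit x).symm m (p - q)
        = RD.inner x (ra.anchor x) (ra.anchor_unit x).symm m p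
          - RD.inner x (ra.anchor x) (ra.anchor_unit x).symm m q := by
    intro p q
    have h := RD.inner_add_right x (ra.anchor x) (ra.anchor_unit x).symm m q (p - q)
    rw [show q + (p - q) = p by abel] at h
    rw [h]; abel
  unfold uInner
  rw [tsde_cast_sub (uEB ra x).symm, key]

/-- (L4) definiteness at the unit fibre. -/
theorem uInner_self_eq_zero (RD : DemiEquiv FB ra Mf) (x : X) (m : Mf x)
    (h : uInner RD x m m = 0) : m = 0 :=
  RD.inner_self_eq_zero x (ra.anchor_unit x).symm m h

/-- (L5) associativity of the unit-fibre multiplication on `B`. -/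
theorem uBmul_assoc (FB : FellBundle ℋ Bf) (ra : RightGroupoidAction ℋ X) (x : X)
    (b c d : Bf (ra.anchor x)) :
    uBmul FB ra x (uBmul FB ra x b c) d = uBmul FB ra x b (uBmul FB ra x c d) := by
  unfold uBmul
  have h₁ : ℋ.src (ℋ.mul (ra.anchor x) (ra.anchor x) (uHB1 ra x)) = ℋ.rng (ra.anchor x) :=
    (ℋ.src_mul (ra.anchor x) (ra.anchor x) (uHB1 ra x)).trans (uHB1 ra x)
  have h₂ : ℋ.src (ra.anchor x) = ℋ.rng (ℋ.mul (ra.anchor x) (ra.anchor x) (uHB1 ra x)) :=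
    (uHB1 ra x).trans (ℋ.rng_mul (ra.anchor x) (ra.anchor x) (uHB1 ra x)).symm
  have assoc := FB.mul_assoc (uHB1 ra x) (uHB1 ra x) h₁ h₂ b c d
  refine eq_of_heq (HEq.trans (cast_heq _ _) (HEq.trans ?hl (HEq.trans assoc
    (HEq.trans ?hr (cast_heq _ _).symm))))
  · exact tsde_FBmul_heq FB (uHB2 ra x).symm rfl (uHB1 ra x) h₁ (cast_heq _ _) HEq.rfl
  · exact tsde_FBmul_heq FB rfl (uHB2 ra x) h₂ (uHB1 ra x) HEq.rfl (cast_heq _ _).symm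

/-- (L6) the unit-fibre involution on `B` is involutive. -/
theorem uBstar_star (FB : FellBundle ℋ Bf) (ra : RightGroupoidAction ℋ X) (x : X)
    (b : Bf (ra.anchor x)) : uBstar FB ra x (uBstar FB ra x b) = b := by
  unfold uBstar
  refine eq_of_heq (HEq.trans (cast_heq _ _) (HEq.trans ?_ (FB.star_star b)))
  exact tsde_FBstar_heq FB (uHB3 ra x).symm (cast_heq _ _)

/-- (L7) the unit-fibre involution is anti-multiplicative. -/
theorem uBstar_mul (FB : FellBundle ℋ Bf) (ra : RightGroupoidAction ℋ X) (x : X)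
    (b c : Bf (ra.anchor x)) :
    uBstar FB ra x (uBmul FB ra x b c)
      = uBmul FB ra x (uBstar FB ra x c) (uBstar FB ra x b) := by
  unfold uBmul uBstar
  have hc' : ℋ.src (ℋ.inv (ra.anchor x)) = ℋ.rng (ℋ.inv (ra.anchor x)) :=
    ((ℋ.src_inv (ra.anchor x)).trans (ra.anchor_unit x)).trans
      (((ℋ.rng_inv (ra.anchor x)).trans (tsde_src_unit ℋ (ra.anchor_unit x))).symm)
  have sm := FB.star_mul (uHB1 ra x) hc' b c
  refine eq_of_heq (HEq.trans (cast_heq _ _) (HEq.trans ?h1 (HEq.trans sm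
    (HEq.trans ?h2 (cast_heq _ _).symm))))
  · exact tsde_FBstar_heq FB (uHB2 ra x).symm (cast_heq _ _)
  · exact tsde_FBmul_heq FB (uHB3 ra x) (uHB3 ra x) hc' (uHB1 ra x)
      (cast_heq _ _).symm (cast_heq _ _).symm

/-- (L13) associativity of the unit-fibre right action. -/
theorem uRact_assoc (RD : DemiEquiv FB ra Mf) (x : X) (m : Mf x)
    (b c : Bf (ra.anchor x)) :
    uRact RD x (uRact RD x m b) c = uRact RD x m (uBmul FB ra x b c) := by
  have key : ∀ y : Mf x,
      uInner RD x y (uRact RD x (uRact RD x m b) c)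
        = uInner RD x y (uRact RD x m (uBmul FB ra x b c)) := by
    intro y
    rw [uInner_ract, uInner_ract, uInner_ract, uBmul_assoc]
  have h0 : uInner RD x (uRact RD x (uRact RD x m b) c - uRact RD x m (uBmul FB ra x b c))
      (uRact RD x (uRact RD x m b) c - uRact RD x m (uBmul FB ra x b c)) = 0 := by
    rw [uInner_sub, key, sub_self]
  exact sub_eq_zero.mp (uInner_self_eq_zero RD x _ h0)

end TSDEUnitLemmas

section TSDEMain

variable {G H : Type*} [TopologicalSpace G] [TopologicalSpace H]
  {𝒢 : TopGroupoid G} {ℋ : TopGroupoid H}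
  {Af : G → Type*} [∀ g, NormedAddCommGroup (Af g)] [∀ g, NormedSpace ℂ (Af g)]
  [∀ g, CompleteSpace (Af g)] [TopologicalSpace (Σ g, Af g)]
  {Bf : H → Type*} [∀ h, NormedAddCommGroup (Bf h)] [∀ h, NormedSpace ℂ (Bf h)]
  [∀ h, CompleteSpace (Bf h)] [TopologicalSpace (Σ h, Bf h)]
  {FA : FellBundle 𝒢 Af} {FB : FellBundle ℋ Bf}
  {X : Type*} [TopologicalSpace X]
  {lam : LeftGroupoidAction 𝒢 X} {ra : RightGroupoidAction ℋ X}
  {Mf : X → Type*} [∀ x, NormedAddCommGroup (Mf x)] [∀ x, NormedSpace ℂ (Mf x)]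
  [∀ x, CompleteSpace (Mf x)] [TopologicalSpace (Σ x, Mf x)]

theorem uAmul_add (FA : FellBundle 𝒢 Af) (lam : LeftGroupoidAction 𝒢 X) (x : X)
    (a c c' : Af (lam.anchor x)) :
    uAmul FA lam x a (c + c') = uAmul FA lam x a c + uAmul FA lam x a c' := by
  unfold uAmul
  rw [FA.mul_add, tsde_cast_add (uGA3 lam x)]

theorem uAmul_smul (FA : FellBundle 𝒢 Af) (lam : LeftGroupoidAction 𝒢 X) (x : X)
    (a : Af (lam.anchor x)) (z : ℂ) (c : Af (lam.anchor x)) :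
    uAmul FA lam x a (z • c) = z • uAmul FA lam x a c := by
  unfold uAmul
  rw [FA.mul_smul', tsde_cast_smul (uGA3 lam x)]

theorem uAmul_sub_left (FA : FellBundle 𝒢 Af) (lam : LeftGroupoidAction 𝒢 X) (x : X)
    (a a' c : Af (lam.anchor x)) :
    uAmul FA lam x (a - a') c = uAmul FA lam x a c - uAmul FA lam x a' c := by
  unfold uAmul
  have h := FA.add_mul (uGA2 lam x) a' (a - a') c
  rw [show a' + (a - a') = a by abel] at h
  rw [h, tsde_cast_add (uGA3 lam x), add_sub_cancel_left]

theorem uAmul_norm_le (FA : FellBundle 𝒢 Af) (lam : LeftGroupoidAction 𝒢 X) (x : X)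
    (a c : Af (lam.anchor x)) : ‖uAmul FA lam x a c‖ ≤ ‖a‖ * ‖c‖ := by
  unfold uAmul
  rw [tsde_heq_norm (uGA3 lam x).symm
    (cast_heq (congrArg Af (uGA3 lam x)) (FA.mul (uGA2 lam x) a c))]
  exact FA.norm_mul_le (uGA2 lam x) a c

theorem uAmul_star_norm (FA : FellBundle 𝒢 Af) (lam : LeftGroupoidAction 𝒢 X) (x : X)
    (a : Af (lam.anchor x)) : ‖uAmul FA lam x a (uAstar FA lam x a)‖ = ‖a‖ ^ 2 := by
  unfold uAmul uAstar
  have hinv2 : 𝒢.inv (𝒢.inv (lam.anchor x)) = lam.anchor x :=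
    (congrArg 𝒢.inv (uGA4 lam x)).trans (uGA4 lam x)
  have hc₂ : 𝒢.src (𝒢.inv (𝒢.inv (lam.anchor x))) = 𝒢.rng (𝒢.inv (lam.anchor x)) :=
    𝒢.src_inv (𝒢.inv (lam.anchor x))
  have hidx : lam.anchor x
      = 𝒢.mul (𝒢.inv (𝒢.inv (lam.anchor x))) (𝒢.inv (lam.anchor x)) hc₂ :=
    (uGA3 lam x).symm.trans
      (tsde_gmul_congr 𝒢 hinv2.symm (uGA4 lam x).symm (uGA2 lam x) hc₂)
  have hh : HEq (cast (congrArg Af (uGA3 lam x)) (FA.mul (uGA2 lam x) a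
        (cast (congrArg Af (uGA4 lam x)) (FA.star' a))))
      (FA.mul hc₂ (FA.star' (FA.star' a)) (FA.star' a)) :=
    (cast_heq _ _).trans (tsde_FBmul_heq FA hinv2.symm (uGA4 lam x).symm (uGA2 lam x) hc₂
      (FA.star_star a).symm (cast_heq _ _))
  rw [tsde_heq_norm hidx hh, FA.cstar_norm hc₂ (FA.star' a), FA.norm_star a]

/-- (L9) `a · _A⟨m, n⟩ = _A⟨a ⊲ m, n⟩` at the unit fibre. -/
theorem uLinner_lact (LD : LeftDemiEquiv FA lam Mf) (x : X) (a : Af (lam.anchor x))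
    (m n : Mf x) :
    uAmul FA lam x a (uLinner LD x m n) = uLinner LD x (uLact LD x a m) n := by
  unfold uAmul uLinner uLact
  have hc' : 𝒢.src (lam.anchor x) = lam.anchor (lam.act (lam.anchor x) x (uGA1 lam x)) :=
    (uGA1 lam x).trans (congrArg lam.anchor (uEA lam x)).symm
  have hc'' : 𝒢.src (𝒢.mul (lam.anchor x) (lam.anchor x) (uGA2 lam x)) = lam.anchor x :=
    (congrArg 𝒢.src (uGA3 lam x)).trans (uGA1 lam x)
  have hacts : lam.act (lam.anchor x) (lam.act (lam.anchor x) x (uGA1 lam x)) hc'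
      = lam.act (𝒢.mul (lam.anchor x) (lam.anchor x) (uGA2 lam x)) x hc'' :=
    tsde_lact_congr lam (uGA3 lam x).symm (uEA lam x) hc' hc''
  have ll := LD.linner_lact (lam.anchor x) (lam.anchor x) x (uGA1 lam x) hc' (uGA2 lam x)
    hc'' hacts a (cast (congrArg Mf (uEA lam x).symm) m) n
  refine eq_of_heq (HEq.trans (cast_heq _ _) (HEq.trans (heq_of_eq ll.symm) ?_))
  refine LD.linner_heq (uGA3 lam x) rfl hc'' (uGA1 lam x) ?_ HEq.rfl
  refine HEq.trans (cast_heq _ _) ?_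
  refine HEq.trans
    (LD.lact_heq rfl (uEA lam x) hc' (uGA1 lam x) HEq.rfl (cast_heq _ _)) ?_
  exact ((cast_heq _ _).trans (cast_heq _ _)).symm

/-- (L8) compatibility of inner products at the unit fibre. -/
theorem uCompat (LD : LeftDemiEquiv FA lam Mf) (RD : DemiEquiv FB ra Mf)
    (hcompat : InnerCompat LD RD) (x : X) (p q n : Mf x) :
    uLact LD x (uLinner LD x p q) n = uRact RD x p (uInner RD x q n) := by
  unfold uLact uLinner uRact uInner
  have hcu : ra.anchor x = ℋ.rng (ra.anchor x) := (ra.anchor_unit x).symm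
  have hcr' : ra.anchor (lam.act (lam.anchor x) x (uGA1 lam x)) = ℋ.rng (ra.anchor x) :=
    (congrArg ra.anchor (uEA lam x)).trans hcu
  have hcl' : 𝒢.src (lam.anchor x) = lam.anchor (ra.act x (ra.anchor x) hcu) :=
    (uGA1 lam x).trans (congrArg lam.anchor (uEB ra x)).symm
  have hcm : ra.act (lam.act (lam.anchor x) x (uGA1 lam x)) (ra.anchor x) hcr'
      = lam.act (lam.anchor x) (ra.act x (ra.anchor x) hcu) hcl' :=
    ((tsde_ract_congr ra (uEA lam x) rfl hcr' hcu).trans (uEB ra x)).trans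
      ((uEA lam x).symm.trans
        (tsde_lact_congr lam rfl (uEB ra x).symm (uGA1 lam x) hcl'))
  have hc := hcompat (lam.anchor x) x (ra.anchor x) (uGA1 lam x) hcu hcr' hcl' hcm
    (cast (congrArg Mf (uEA lam x).symm) p) q (cast (congrArg Mf (uEB ra x).symm) n)
  refine eq_of_heq (HEq.trans (cast_heq _ _) (HEq.trans ?h1 (HEq.trans (heq_of_eq hc)
    (HEq.trans (cast_heq _ _) (HEq.trans ?h2 (cast_heq _ _).symm)))))
  · exact LD.lact_heq rfl (uEB ra x).symm (uGA1 lam x) hcl' HEq.rfl (cast_heq _ _).symm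
  · exact RD.ract_heq (uEA lam x) rfl hcr' hcu (cast_heq _ _) HEq.rfl

theorem uFull (LD : LeftDemiEquiv FA lam Mf) (x : X) :
    Dense ((Submodule.span ℂ
        {a : Af (lam.anchor x) | ∃ m n : Mf x, a = uLinner LD x m n} :
      Submodule ℂ (Af (lam.anchor x))) : Set (Af (lam.anchor x))) :=
  LD.full x (uGA1 lam x)

/-- The main step: right-adjointability is automatic. -/
theorem tsde_rightAdj (LD : LeftDemiEquiv FA lam Mf) (RD : DemiEquiv FB ra Mf)
    (hcompat : InnerCompat LD RD) : RightActionAdjointable LD RD := by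
  intro x hcu hcl hinv b m₁ m₂
  show uLinner LD x (uRact RD x m₁ b) m₂
    = uLinner LD x m₁ (uRact RD x m₂ (uBstar FB ra x b))
  have stepA : ∀ n : Mf x,
      uLact LD x (uLinner LD x (uRact RD x m₁ b) m₂) n
        = uLact LD x (uLinner LD x m₁ (uRact RD x m₂ (uBstar FB ra x b))) n := by
    intro n
    rw [uCompat LD RD hcompat, uCompat LD RD hcompat, uRact_assoc]
    congr 1
    rw [← uInner_star RD x n (uRact RD x m₂ (uBstar FB ra x b)), uInner_ract,
      uBstar_mul, uBstar_star, uInner_star]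
  set a₀ := uLinner LD x (uRact RD x m₁ b) m₂
    - uLinner LD x m₁ (uRact RD x m₂ (uBstar FB ra x b)) with ha₀
  have stepC : ∀ m n : Mf x, uAmul FA lam x a₀ (uLinner LD x m n) = 0 := by
    intro m n
    rw [ha₀, uAmul_sub_left, uLinner_lact, uLinner_lact, stepA, sub_self]
  let T : Af (lam.anchor x) →ₗ[ℂ] Af (lam.anchor x) :=
    { toFun := fun c => uAmul FA lam x a₀ c
      map_add' := fun c c' => uAmul_add FA lam x a₀ c c'
      map_smul' := fun z c => uAmul_smul FA lam x a₀ z c }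
  have Tcont : Continuous T :=
    (LinearMap.mkContinuous T ‖a₀‖ (fun c => uAmul_norm_le FA lam x a₀ c)).continuous
  have hTzero : ∀ c : Af (lam.anchor x), uAmul FA lam x a₀ c = 0 := by
    have hclosed : IsClosed {c : Af (lam.anchor x) | T c = 0} :=
      isClosed_eq Tcont continuous_const
    have hle : Submodule.span ℂ
        {a : Af (lam.anchor x) | ∃ m n : Mf x, a = uLinner LD x m n}
          ≤ LinearMap.ker T := by
      rw [Submodule.span_le]
      rintro a ⟨m, n, rfl⟩
      exact LinearMap.mem_ker.mpr (stepC m n)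
    have hsub : ((Submodule.span ℂ
        {a : Af (lam.anchor x) | ∃ m n : Mf x, a = uLinner LD x m n} :
          Submodule ℂ _) : Set _) ⊆ {c | T c = 0} := fun c hc => hle hc
    intro c
    have hmem : c ∈ closure ((Submodule.span ℂ
        {a : Af (lam.anchor x) | ∃ m n : Mf x, a = uLinner LD x m n} :
          Submodule ℂ _) : Set _) := by
      rw [(uFull LD x).closure_eq]; trivial
    exact closure_minimal hsub hclosed hmem
  have hnorm : ‖a₀‖ ^ 2 = 0 := by
    rw [← uAmul_star_norm FA lam x a₀, hTzero (uAstar FA lam x a₀), norm_zero]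
  have ha : a₀ = 0 := norm_eq_zero.mp ((pow_eq_zero_iff two_ne_zero).mp hnorm)
  rw [ha₀] at ha
  exact sub_eq_zero.mp ha

end TSDEMain

/-- **Proposition 2.4** (`prop:from two-sided demi to equivalence`). -/
theorem twoSided_demiEquiv_is_equivalence
    {G H X : Type*} [TopologicalSpace G] [TopologicalSpace H] [TopologicalSpace X]
    [LocallyCompactSpace G] [T2Space G] [LocallyCompactSpace H] [T2Space H]
    [LocallyCompactSpace X] [T2Space X]
    {𝒢 : TopGroupoid G} {ℋ : TopGroupoid H}
    (Eqv : GroupoidEquivalence 𝒢 ℋ X)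
    {Af : G → Type*} [∀ g, NormedAddCommGroup (Af g)] [∀ g, NormedSpace ℂ (Af g)]
    [∀ g, CompleteSpace (Af g)] [TopologicalSpace (Σ g, Af g)]
    {Bf : H → Type*} [∀ h, NormedAddCommGroup (Bf h)] [∀ h, NormedSpace ℂ (Bf h)]
    [∀ h, CompleteSpace (Bf h)] [TopologicalSpace (Σ h, Bf h)]
    (FA : FellBundle 𝒢 Af) (FB : FellBundle ℋ Bf)
    {Mf : X → Type*} [∀ x, NormedAddCommGroup (Mf x)] [∀ x, NormedSpace ℂ (Mf x)]
    [∀ x, CompleteSpace (Mf x)] [TopologicalSpace (Σ x, Mf x)]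
    (LD : LeftDemiEquiv FA Eqv.lact Mf) (RD : DemiEquiv FB Eqv.ract Mf)
    -- (1) the two actions commute
    (hcomm : ActionsCommute LD RD)
    -- (2) each A(ρ(x)) acts on M(x) by B(σ(x))-adjointable operators
    (hadj : LeftActionAdjointable LD RD)
    -- (3) the inner products are compatible: _A⟨m₁,m₂⟩ ⊲ m₃ = m₁ ⊳ ⟨m₂,m₃⟩_B
    (hcompat : InnerCompat LD RD) :
    -- then M is an equivalence between the Fell bundles A and B
    ∃ EQ : FellBundleEquivalence FA FB Eqv.lact Eqv.ract Mf,
      EQ.left = LD ∧ EQ.right = RD :=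
  ⟨⟨LD, RD, hcomm, hcompat, hadj, tsde_rightAdj LD RD hcompat⟩, rfl, rfl⟩
end
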